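/- arXiv:math/0612384 — 12 statements merged into one kernel-verified Lean document; each statement's English description precedes it below -/
import Mathlib

section
/- Let n ≥ 1 and let x, y be vectors in n-dimensional Euclidean space with ‖x‖ = ‖y‖ = 1. Then there exists a linear isometric equivalence σ of ℝⁿ × ℝⁿ (equipped with the product inner product) such that σ(x, y) = (x, y), σ(x, −y) = (−x, y), and σ maps the set M = {(u, v) : ‖u‖ = 1 and ‖v‖ = 1} onto itself. (This exhibits S^{n−1}(1) × S^{n−1}(1) as a weakly reflective submanifold of the sphere of radius √2 in ℝ^{2n}: at the point (x,y) the vector (x,−y) spans the normal space of M inside that sphere, and σ fixes the point, reverses the normal vector, and preserves M.) -/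
/-! Since `‖x‖ = ‖y‖`, the reflection `A` in the hyperplane orthogonal to `x - y` exchanges `x`
and `y`. Then `σ (u, v) = (A v, A u)` is a linear isometry of the `L²` product fixing `(x, y)`,
sending `(x, -y)` to `(-x, y)`, and preserving the product of unit spheres since it permutes the
norms of the two components. -/

section

variable {E : Type*} [NormedAddCommGroup E] [InnerProductSpace ℝ E]

theorem exists_linearIsometryEquiv_swap_of_norm_eq {x y : E} (h : ‖x‖ = ‖y‖) :
    ∃ A : E ≃ₗᵢ[ℝ] E, A x = y ∧ A y = x := by
  have hxy : (ℝ ∙ (x - y))ᗮ.reflection x = y := Submodule.reflection_sub h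
  exact ⟨_, hxy, (congrArg _ hxy).symm.trans (Submodule.reflection_reflection _ x)⟩

noncomputable def LinearIsometryEquiv.swapProd (A : E ≃ₗᵢ[ℝ] E) :
    WithLp 2 (E × E) ≃ₗᵢ[ℝ] WithLp 2 (E × E) :=
  (LinearIsometryEquiv.withLpProdComm 2 ℝ E E).trans (LinearIsometryEquiv.withLpProdCongr 2 A A)

theorem LinearIsometryEquiv.swapProd_apply (A : E ≃ₗᵢ[ℝ] E) (u v : E) :
    A.swapProd (WithLp.toLp 2 (u, v)) = WithLp.toLp 2 (A v, A u) :=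
  rfl

@[simp]
theorem LinearIsometryEquiv.swapProd_fst (A : E ≃ₗᵢ[ℝ] E) (p : WithLp 2 (E × E)) :
    (A.swapProd p).fst = A p.snd :=
  rfl

@[simp]
theorem LinearIsometryEquiv.swapProd_snd (A : E ≃ₗᵢ[ℝ] E) (p : WithLp 2 (E × E)) :
    (A.swapProd p).snd = A p.fst :=
  rfl

theorem LinearIsometryEquiv.swapProd_image_sphere_prod (A : E ≃ₗᵢ[ℝ] E) (r : ℝ) :
    A.swapProd '' {p | ‖p.fst‖ = r ∧ ‖p.snd‖ = r} = {p | ‖p.fst‖ = r ∧ ‖p.snd‖ = r} := by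
  have hpre : A.swapProd ⁻¹' {p | ‖p.fst‖ = r ∧ ‖p.snd‖ = r} = {p | ‖p.fst‖ = r ∧ ‖p.snd‖ = r} := by
    ext p
    simp only [Set.mem_preimage, Set.mem_ofPred_eq, swapProd_fst, swapProd_snd, A.norm_map]
    exact and_comm
  conv_lhs => rw [← hpre]
  exact A.swapProd.surjective.image_preimage _

end

theorem stmt_0_general (n : ℕ) (x y : EuclideanSpace ℝ (Fin n))
    (hx : ‖x‖ = 1) (hy : ‖y‖ = 1) :
    ∃ σ : WithLp 2 (EuclideanSpace ℝ (Fin n) × EuclideanSpace ℝ (Fin n)) ≃ₗᵢ[ℝ]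
        WithLp 2 (EuclideanSpace ℝ (Fin n) × EuclideanSpace ℝ (Fin n)),
      σ ((WithLp.equiv 2 _).symm (x, y)) = (WithLp.equiv 2 _).symm (x, y) ∧
      σ ((WithLp.equiv 2 _).symm (x, -y)) = (WithLp.equiv 2 _).symm (-x, y) ∧
      σ '' {p | ‖(WithLp.equiv 2 _ p).1‖ = 1 ∧ ‖(WithLp.equiv 2 _ p).2‖ = 1}
        = {p | ‖(WithLp.equiv 2 _ p).1‖ = 1 ∧ ‖(WithLp.equiv 2 _ p).2‖ = 1} := by
  obtain ⟨A, hAx, hAy⟩ := exists_linearIsometryEquiv_swap_of_norm_eq (hx.trans hy.symm)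
  refine ⟨A.swapProd, ?_, ?_, A.swapProd_image_sphere_prod 1⟩
  · rw [WithLp.equiv_symm_apply, A.swapProd_apply, hAx, hAy]
  · rw [WithLp.equiv_symm_apply, A.swapProd_apply, map_neg, hAx, hAy]

/-- `S^{n-1}(1) × S^{n-1}(1)` is a weakly reflective submanifold of the sphere of
radius `√2` in `ℝⁿ × ℝⁿ` (with the product inner product): at the point `(x, y)`
there is a linear isometric equivalence fixing `(x, y)`, sending the normal vector
`(x, -y)` to its negative, and preserving the product of spheres. -/
theorem stmt_0 (n : ℕ) (hn : 1 ≤ n) (x y : EuclideanSpace ℝ (Fin n))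
    (hx : ‖x‖ = 1) (hy : ‖y‖ = 1) :
    ∃ σ : WithLp 2 (EuclideanSpace ℝ (Fin n) × EuclideanSpace ℝ (Fin n)) ≃ₗᵢ[ℝ]
        WithLp 2 (EuclideanSpace ℝ (Fin n) × EuclideanSpace ℝ (Fin n)),
      σ ((WithLp.equiv 2 _).symm (x, y)) = (WithLp.equiv 2 _).symm (x, y) ∧
      σ ((WithLp.equiv 2 _).symm (x, -y)) = (WithLp.equiv 2 _).symm (-x, y) ∧
      σ '' {p | ‖(WithLp.equiv 2 _ p).1‖ = 1 ∧ ‖(WithLp.equiv 2 _ p).2‖ = 1}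
        = {p | ‖(WithLp.equiv 2 _ p).1‖ = 1 ∧ ‖(WithLp.equiv 2 _ p).2‖ = 1} :=
  stmt_0_general n x y hx hy
end

section
/- Let V be a real inner product space and let A be a finite multiset of vectors in V. Then the following are equivalent: (i) for every v ∈ V, the multiset obtained by mapping each a ∈ A to ⟪a, v⟫ equals the multiset obtained by mapping each a ∈ A to −⟪a, v⟫; (ii) the multiset obtained by mapping each a ∈ A to −a equals A. -/
open scoped RealInnerProductSpace

private lemma generic_vector {V : Type*} [NormedAddCommGroup V] [InnerProductSpace ℝ V]
    (T : Finset V) (hT : ∀ w ∈ T, w ≠ 0) : ∃ v : V, ∀ w ∈ T, ⟪w, v⟫ ≠ 0 := by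
  by_contra hc
  push_neg at hc
  have hcov : ⋃ w : T, ((LinearMap.ker (innerₗ V (w : V))) : Set V) = Set.univ := by
    apply Set.eq_univ_of_forall
    intro v
    obtain ⟨w, hw, hwv⟩ := hc v
    exact Set.mem_iUnion.2 ⟨⟨w, hw⟩, by simpa [LinearMap.mem_ker] using hwv⟩
  obtain ⟨⟨w, hw⟩, hker⟩ := Subspace.exists_eq_top_of_iUnion_eq_univ hcov
  have hww : ⟪w, w⟫ = 0 := by
    have : w ∈ LinearMap.ker (innerₗ V w) := hker ▸ Submodule.mem_top
    simpa using this
  exact hT w hw (by simpa using hww)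

/-- For a finite multiset `A` of vectors in a real inner product space, the
multiset of inner products `⟪a, v⟫` is symmetric under multiplication by `-1`
for every `v` if and only if `A` itself is invariant under negation. -/
theorem stmt_2 {V : Type*} [NormedAddCommGroup V] [InnerProductSpace ℝ V]
    (A : Multiset V) :
    (∀ v : V, A.map (fun a => ⟪a, v⟫) = A.map (fun a => -⟪a, v⟫)) ↔
      A.map (fun a => -a) = A := by
  classical
  constructor
  · intro h
    set T : Finset V := ((A.toFinset ×ˢ A.toFinset).image (fun p => p.1 + p.2) ∪
        (A.toFinset ×ˢ A.toFinset).image (fun p => p.1 - p.2)).filter (· ≠ 0) with hTdef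
    obtain ⟨v, hv⟩ := generic_vector T (by intro w hw; exact (Finset.mem_filter.1 hw).2)
    have hsep : ∀ a ∈ A, ∀ b ∈ A, ⟪a, v⟫ = ⟪b, v⟫ → a = b := by
      intro a ha b hb hab
      by_contra hne
      have hmem : a - b ∈ T := by
        refine Finset.mem_filter.2 ⟨Finset.mem_union_right _ ?_, sub_ne_zero.2 hne⟩
        exact Finset.mem_image.2 ⟨(a, b), Finset.mem_product.2
          ⟨Multiset.mem_toFinset.2 ha, Multiset.mem_toFinset.2 hb⟩, rfl⟩
      exact hv _ hmem (by rw [inner_sub_left]; linarith)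
    have hsep' : ∀ a ∈ A, ∀ b ∈ A, ⟪a, v⟫ = -⟪b, v⟫ → a = -b := by
      intro a ha b hb hab
      by_contra hne
      have hmem : a + b ∈ T := by
        refine Finset.mem_filter.2 ⟨Finset.mem_union_left _ ?_, ?_⟩
        · exact Finset.mem_image.2 ⟨(a, b), Finset.mem_product.2
            ⟨Multiset.mem_toFinset.2 ha, Multiset.mem_toFinset.2 hb⟩, rfl⟩
        · intro h0
          exact hne (by rw [← sub_eq_zero]; simpa [sub_neg_eq_add] using h0)
      exact hv _ hmem (by rw [inner_add_left]; linarith)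
    set f : V → ℝ := fun a => ⟪a, v⟫ with hf
    have hM : ∀ t : ℝ, (A.map f).count t = (A.map f).count (-t) := by
      intro t
      conv_lhs => rw [h v]
      have hmm : (A.map fun a => -⟪a, v⟫) = (A.map f).map (fun x => -x) := by
        rw [Multiset.map_map]; rfl
      rw [hmm]
      have := Multiset.count_map_eq_count' (fun x : ℝ => -x) (A.map f) neg_injective (-t)
      simpa using this
    have key : ∀ a ∈ A, A.count (-a) = A.count a := by
      intro a ha
      have e1 : A.count a = (A.map f).count (f a) := by
        rw [Multiset.count_map, Multiset.count_eq_card_filter_eq]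
        congr 1
        refine Multiset.filter_congr fun b hb => ⟨fun hab => hab ▸ rfl, fun hab => ?_⟩
        exact hsep a ha b hb hab
      have e2 : A.count (-a) = (A.map f).count (-(f a)) := by
        rw [Multiset.count_map, Multiset.count_eq_card_filter_eq]
        congr 1
        refine Multiset.filter_congr fun b hb => ⟨fun hab => ?_, fun hab => ?_⟩
        · rw [← hab]; simp [hf, inner_neg_left]
        · have : b = -a := by
            have := hsep' b hb a ha (by simpa [hf] using hab.symm)
            rw [this]
          exact this.symm
      rw [e1, e2, ← hM (f a)]
    have key' : ∀ a : V, A.count (-a) = A.count a := by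
      intro a
      by_cases ha : a ∈ A
      · exact key a ha
      · by_cases hna : -a ∈ A
        · have := key (-a) hna
          simpa using this.symm
        · rw [Multiset.count_eq_zero_of_notMem ha, Multiset.count_eq_zero_of_notMem hna]
    ext b
    have := Multiset.count_map_eq_count' (fun a : V => -a) A neg_injective (-b)
    simpa [key' b] using this
  · intro h v
    conv_lhs => rw [← h, Multiset.map_map]
    simp [Function.comp, inner_neg_left]
end

section
/- Let V be a finite-dimensional real inner product space and let F be a finite linearly independent subset of V. For each subset Δ ⊆ F define C^Δ = {H ∈ V : ⟪α, H⟫ > 0 for every α ∈ Δ, and ⟪β, H⟫ = 0 for every β ∈ F \ Δ}. Then: (1) for every Δ₁ ⊆ F, the topological closure of C^{Δ₁} equals the union ⋃_{Δ ⊆ Δ₁} C^Δ, and the sets C^Δ for distinct subsets Δ ⊆ Δ₁ are pairwise disjoint; (2) for all Δ₁, Δ₂ ⊆ F, one has Δ₁ ⊆ Δ₂ if and only if C^{Δ₁} is contained in the closure of C^{Δ₂}. -/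
/-!
The face `C^Δ` is the relatively open cell of the closed cone on which the coordinates
`⟪α, ·⟫`, `α ∈ F`, are positive exactly on `Δ`. Since `F` is linearly independent these
coordinates can be prescribed freely, so every face is nonempty. The closure of `C^{Δ₁}` is the
closed face `{⟪α, ·⟫ ≥ 0 on Δ₁, = 0 on F \ Δ₁}`: if `H` lies in it and `H₁ ∈ C^{Δ₁}`, then
`H + t • H₁ ∈ C^{Δ₁}` for every `t > 0`. Sorting the points of the closed face by the set of
coordinates that are positive splits it into the disjoint faces `C^Δ`, `Δ ⊆ Δ₁`, and
part (2) follows by evaluating a point of `C^{Δ₁}` on the coordinates of `Δ₁`.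
-/

open scoped RealInnerProductSpace

section

variable {V : Type*} [NormedAddCommGroup V] [InnerProductSpace ℝ V]

theorem LinearIndependent.exists_inner_eq [FiniteDimensional ℝ V] {ι : Type*} {v : ι → V}
    (hv : LinearIndependent ℝ v) (c : ι → ℝ) : ∃ H : V, ∀ i, ⟪v i, H⟫ = c i := by
  obtain ⟨f, hf⟩ := LinearMap.exists_extend (Finsupp.linearCombination ℝ c ∘ₗ hv.repr)
  refine ⟨(InnerProductSpace.toDual ℝ V).symm (LinearMap.toContinuousLinearMap f), fun i => ?_⟩
  have hfv : f (v i) = c i := by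
    have := LinearMap.congr_fun hf ⟨v i, Submodule.subset_span (Set.mem_range_self i)⟩
    rw [LinearMap.comp_apply, LinearMap.comp_apply, hv.repr_eq_single i _ rfl] at this
    simpa using this
  rw [real_inner_comm, InnerProductSpace.toDual_symm_apply]
  exact hfv

def face (F Δ : Finset V) : Set V :=
  {H | (∀ α ∈ Δ, 0 < ⟪α, H⟫) ∧ ∀ β ∈ F, β ∉ Δ → ⟪β, H⟫ = 0}

def closedFace (F Δ : Finset V) : Set V :=
  {H | (∀ α ∈ Δ, 0 ≤ ⟪α, H⟫) ∧ ∀ β ∈ F, β ∉ Δ → ⟪β, H⟫ = 0}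

variable {F Δ Δ₁ Δ₂ : Finset V}

theorem face_nonempty [FiniteDimensional ℝ V] (hF : LinearIndependent ℝ (fun x : F => (x : V)))
    (hΔ : Δ ⊆ F) : (face F Δ).Nonempty := by
  classical
  obtain ⟨H, hH⟩ := hF.exists_inner_eq fun x => if (x : V) ∈ Δ then 1 else 0
  refine ⟨H, fun α hα => ?_, fun β hβ hβΔ => ?_⟩
  · simp [hH ⟨α, hΔ hα⟩, hα]
  · simpa [hβΔ] using hH ⟨β, hβ⟩

theorem face_subset_closedFace : face F Δ ⊆ closedFace F Δ :=
  fun _ hH => ⟨fun α hα => (hH.1 α hα).le, hH.2⟩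

theorem isClosed_closedFace : IsClosed (closedFace F Δ) := by
  simp only [closedFace, Set.ofPred_and, Set.ofPred_forall]
  refine .inter (isClosed_iInter fun α => isClosed_iInter fun _ => ?_)
    (isClosed_iInter fun β => isClosed_iInter fun _ => isClosed_iInter fun _ => ?_)
  · exact isClosed_le (by fun_prop) (by fun_prop)
  · exact isClosed_eq (by fun_prop) (by fun_prop)

theorem add_smul_mem_face {H H₁ : V} (hH : H ∈ closedFace F Δ) (hH₁ : H₁ ∈ face F Δ) {t : ℝ}
    (ht : 0 < t) : H + t • H₁ ∈ face F Δ := by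
  refine ⟨fun α hα => ?_, fun β hβ hβΔ => ?_⟩
  · rw [inner_add_right, real_inner_smul_right]
    nlinarith [hH.1 α hα, hH₁.1 α hα]
  · rw [inner_add_right, real_inner_smul_right, hH.2 β hβ hβΔ, hH₁.2 β hβ hβΔ]
    ring

theorem closure_face [FiniteDimensional ℝ V] (hF : LinearIndependent ℝ (fun x : F => (x : V)))
    (hΔ : Δ ⊆ F) : closure (face F Δ) = closedFace F Δ := by
  refine (closure_minimal face_subset_closedFace isClosed_closedFace).antisymm fun H hH => ?_
  obtain ⟨H₁, hH₁⟩ := face_nonempty hF hΔ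
  have htend : Filter.Tendsto (fun t : ℝ => H + t • H₁) (nhdsWithin 0 (Set.Ioi 0)) (nhds H) := by
    have hc : Continuous fun t : ℝ => H + t • H₁ := by fun_prop
    simpa using (hc.tendsto 0).mono_left nhdsWithin_le_nhds
  exact mem_closure_of_tendsto htend
    (Filter.eventually_of_mem self_mem_nhdsWithin fun t ht => add_smul_mem_face hH hH₁ ht)

theorem mem_iff_inner_pos_of_mem_face {H : V} (hH : H ∈ face F Δ) {α : V} (hα : α ∈ F) :
    α ∈ Δ ↔ 0 < ⟪α, H⟫ := by
  refine ⟨hH.1 α, fun hpos => ?_⟩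
  by_contra hαΔ
  exact hpos.ne' (hH.2 α hα hαΔ)

theorem face_subset_closedFace_of_subset (hΔ₂ : Δ₂ ⊆ F) (h : Δ₁ ⊆ Δ₂) :
    face F Δ₁ ⊆ closedFace F Δ₂ := by
  intro H hH
  refine ⟨fun α hα => ?_, fun β hβ hβΔ₂ => hH.2 β hβ fun hβΔ₁ => hβΔ₂ (h hβΔ₁)⟩
  by_cases hαΔ₁ : α ∈ Δ₁
  · exact (hH.1 α hαΔ₁).le
  · exact (hH.2 α (hΔ₂ hα) hαΔ₁).ge

theorem subset_of_face_subset_closedFace [FiniteDimensional ℝ V]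
    (hF : LinearIndependent ℝ (fun x : F => (x : V))) (hΔ₁ : Δ₁ ⊆ F)
    (h : face F Δ₁ ⊆ closedFace F Δ₂) : Δ₁ ⊆ Δ₂ := by
  obtain ⟨H, hH⟩ := face_nonempty hF hΔ₁
  intro α hα
  by_contra hαΔ₂
  exact (hH.1 α hα).ne' ((h hH).2 α (hΔ₁ hα) hαΔ₂)

theorem face_subset_closedFace_iff [FiniteDimensional ℝ V]
    (hF : LinearIndependent ℝ (fun x : F => (x : V))) (hΔ₁ : Δ₁ ⊆ F) (hΔ₂ : Δ₂ ⊆ F) :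
    face F Δ₁ ⊆ closedFace F Δ₂ ↔ Δ₁ ⊆ Δ₂ :=
  ⟨subset_of_face_subset_closedFace hF hΔ₁, face_subset_closedFace_of_subset hΔ₂⟩

theorem closedFace_eq_biUnion_face (hΔ₁ : Δ₁ ⊆ F) :
    closedFace F Δ₁ = ⋃ Δ ∈ Δ₁.powerset, face F Δ := by
  classical
  refine subset_antisymm (fun H hH => ?_) (Set.iUnion₂_subset fun Δ hΔ =>
    face_subset_closedFace_of_subset hΔ₁ (Finset.mem_powerset.1 hΔ))
  refine Set.mem_biUnion (Finset.mem_powerset.2 (Finset.filter_subset (0 < ⟪·, H⟫) Δ₁))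
    ⟨fun α hα => (Finset.mem_filter.1 hα).2, fun β hβ hβΔ => ?_⟩
  by_cases hβΔ₁ : β ∈ Δ₁
  · exact ((hH.1 β hβΔ₁).eq_of_not_lt fun hpos => hβΔ (Finset.mem_filter.2 ⟨hβΔ₁, hpos⟩)).symm
  · exact hH.2 β hβ hβΔ₁

theorem disjoint_face {Δ' : Finset V} (hΔ : Δ ⊆ F) (hΔ' : Δ' ⊆ F) (hne : Δ ≠ Δ') :
    Disjoint (face F Δ) (face F Δ') := by
  refine Set.disjoint_left.2 fun H hH hH' => hne (Finset.ext fun α => ?_)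
  by_cases hα : α ∈ F
  · exact (mem_iff_inner_pos_of_mem_face hH hα).trans (mem_iff_inner_pos_of_mem_face hH' hα).symm
  · exact iff_of_false (fun h => hα (hΔ h)) fun h => hα (hΔ' h)

end

/-- Decomposition of the closed Weyl chamber into its faces `C^Δ`:
for a finite linearly independent set `F` in a finite-dimensional real inner
product space and `C^Δ = {H | ⟪α,H⟫ > 0 (α ∈ Δ), ⟪β,H⟫ = 0 (β ∈ F \ Δ)}`,
(1) the closure of `C^{Δ₁}` is the disjoint union of the `C^Δ` over `Δ ⊆ Δ₁`;
(2) `Δ₁ ⊆ Δ₂` iff `C^{Δ₁} ⊆ closure (C^{Δ₂})`. -/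
theorem stmt_3 {V : Type*} [NormedAddCommGroup V] [InnerProductSpace ℝ V]
    [FiniteDimensional ℝ V] (F : Finset V)
    (hF : LinearIndependent ℝ (fun x : F => (x : V)))
    (C : Finset V → Set V)
    (hC : ∀ Δ : Finset V, C Δ =
      {H : V | (∀ α ∈ Δ, 0 < ⟪α, H⟫) ∧ ∀ β ∈ F, β ∉ Δ → ⟪β, H⟫ = 0}) :
    (∀ Δ₁ : Finset V, Δ₁ ⊆ F →
      (closure (C Δ₁) = ⋃ Δ ∈ Δ₁.powerset, C Δ) ∧
      (∀ Δ ∈ Δ₁.powerset, ∀ Δ' ∈ Δ₁.powerset, Δ ≠ Δ' → Disjoint (C Δ) (C Δ'))) ∧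
    (∀ Δ₁ Δ₂ : Finset V, Δ₁ ⊆ F → Δ₂ ⊆ F →
      (Δ₁ ⊆ Δ₂ ↔ C Δ₁ ⊆ closure (C Δ₂))) := by
  obtain rfl : C = face F := funext hC
  refine ⟨fun Δ₁ hΔ₁ => ⟨?_, fun Δ hΔ Δ' hΔ' => ?_⟩, fun Δ₁ Δ₂ hΔ₁ hΔ₂ => ?_⟩
  · rw [closure_face hF hΔ₁, closedFace_eq_biUnion_face hΔ₁]
  · exact disjoint_face ((Finset.mem_powerset.1 hΔ).trans hΔ₁)
      ((Finset.mem_powerset.1 hΔ').trans hΔ₁)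
  · rw [closure_face hF hΔ₂, face_subset_closedFace_iff hF hΔ₁ hΔ₂]
end

section
/- Let V be a finite-dimensional real inner product space, R₊ a finite set of nonzero vectors in V, and m : V → ℕ a function with m(α) ≥ 1 for every α ∈ R₊. Let H ∈ V be nonzero and not proportional to any element of R₊ (i.e. H ∉ ℝα for every α ∈ R₊). Set P = {α ∈ R₊ : ⟪α, H⟫ ≠ 0} and for α ∈ P set v_H(α) = α/⟪α,H⟫ − H/‖H‖². Let A_H be the multiset consisting of m(α) copies of v_H(α) for each α ∈ P. Then A_H is invariant under negation (the multiset {−x : x ∈ A_H} equals A_H) if and only if there exists a map f : P → P with f(α) ≠ α for all α ∈ P such that for every α ∈ P there exist a real number n_α ≠ 0 and a sign ε_α ∈ {1, −1} with H = n_α·(α/‖α‖ + ε_α·f(α)/‖f(α)‖), and moreover Σ_{μ ∈ P, μ ∈ ℝα} m(μ) = Σ_{ν ∈ P, ν ∈ ℝ f(α)} m(ν) for every α ∈ P. -/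
open scoped RealInnerProductSpace Classical

/-!
The vector `v_H(α)` depends only on the line `ℝα` and separates lines meeting `P`, since
`α = ⟪α, H⟫ • (v_H(α) + H / ‖H‖²)`; hence the multiplicity of `v_H(α)` in `A_H` is the total
multiplicity of the line `ℝα` in `P`, and `A_H = -A_H` amounts to a partner `β ∈ P` of every
`α ∈ P` with `v_H(β) = -v_H(α)` and the same line multiplicity. The partner differs from `α`
because `v_H(α) ≠ 0` as long as `H ∉ ℝα`.

For unit vectors `u, w`, the relation `v_H(w) = -v_H(u)` reads
`u / ⟪u, H⟫ + w / ⟪w, H⟫ = 2 H / ‖H‖²`. Since `v_H(u) ⊥ H`, Pythagoras gives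
`‖v_H(u)‖² = ⟪u, H⟫⁻² - ‖H‖⁻²`, so equal norms force `⟪w, H⟫ = ±⟪u, H⟫` and then
`H ∈ ℝ(u ± w)`. Conversely, if `H = n (u + w)` then `⟪u, H⟫ = ⟪w, H⟫` and `‖H‖² = 2 n ⟪u, H⟫`.
-/

namespace Multiset

variable {ι W : Type*}

theorem count_bind_replicate (s : Finset ι) (m : ι → ℕ) (g : ι → W) (x : W) :
    (s.val.bind fun i => replicate (m i) (g i)).count x = ∑ i ∈ s with g i = x, m i := by
  rw [count_bind, Finset.sum_filter, Finset.sum]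
  simp only [count_replicate]

theorem map_neg_eq_self_iff [InvolutiveNeg W] (s : Multiset W) :
    s.map (fun x => -x) = s ↔ ∀ x ∈ s, s.count (-x) = s.count x := by
  have hcount : ∀ x, (s.map fun y => -y).count x = s.count (-x) := fun x => by
    simpa using count_map_eq_count' (fun y : W => -y) s neg_injective (-x)
  refine ⟨fun h x _ => by rw [← hcount, h], fun h => ext.2 fun x => ?_⟩
  rw [hcount]
  by_cases hx : x ∈ s
  · exact h x hx
  by_cases hnx : -x ∈ s
  · simpa using (h (-x) hnx).symm
  rw [count_eq_zero_of_notMem hx, count_eq_zero_of_notMem hnx]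

theorem map_neg_bind_replicate_eq_self_iff [InvolutiveNeg W] (s : Finset ι) (m : ι → ℕ)
    (hm : ∀ i ∈ s, 1 ≤ m i) (g : ι → W) :
    ((s.val.bind fun i => replicate (m i) (g i)).map fun x => -x)
        = s.val.bind (fun i => replicate (m i) (g i)) ↔
      ∃ f : ι → ι, (∀ i ∈ s, f i ∈ s) ∧ (∀ i ∈ s, g (f i) = -g i) ∧
        ∀ i ∈ s, ∑ j ∈ s with g j = g i, m j = ∑ j ∈ s with g j = g (f i), m j := by
  set A := s.val.bind fun i => replicate (m i) (g i)
  have hmem : ∀ x, x ∈ A ↔ ∃ i ∈ s, g i = x := fun x => by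
    simp only [A, mem_bind, mem_replicate]
    refine ⟨fun ⟨i, hi, _, hx⟩ => ⟨i, hi, hx.symm⟩, fun ⟨i, hi, hx⟩ => ⟨i, hi, ?_, hx.symm⟩⟩
    exact Nat.one_le_iff_ne_zero.1 (hm i hi)
  simp only [← count_bind_replicate, map_neg_eq_self_iff, hmem, forall_exists_index, and_imp,
    forall_apply_eq_imp_iff₂]
  constructor
  · intro h
    have hneg_mem : ∀ i ∈ s, -g i ∈ A := fun i hi => by
      rw [← count_pos, h i hi, count_pos, hmem]
      exact ⟨i, hi, rfl⟩
    choose! f hfs hfg using fun i hi => (hmem _).1 (hneg_mem i hi)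
    exact ⟨f, hfs, hfg, fun i hi => by rw [hfg i hi, h i hi]⟩
  · rintro ⟨f, -, hfg, hcount⟩ i hi
    rw [← hfg i hi, hcount i hi]

end Multiset

section ScaledOrthProj

variable {V : Type*} [NormedAddCommGroup V] [InnerProductSpace ℝ V]

/-- The paper's `v_H(α)`. -/
noncomputable def scaledOrthProj (H α : V) : V := ⟪α, H⟫⁻¹ • α - (‖H‖ ^ 2)⁻¹ • H

variable {H α β : V}

theorem ne_zero_of_inner_ne_zero_right (h : ⟪α, H⟫ ≠ 0) : H ≠ 0 := by
  rintro rfl; exact h (inner_zero_right α)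

theorem ne_zero_of_inner_ne_zero_left (h : ⟪α, H⟫ ≠ 0) : α ≠ 0 := by
  rintro rfl; exact h (inner_zero_left H)

theorem scaledOrthProj_smul {c : ℝ} (hc : c ≠ 0) (α : V) :
    scaledOrthProj H (c • α) = scaledOrthProj H α := by
  rw [scaledOrthProj, scaledOrthProj, real_inner_smul_left, smul_smul, mul_inv_rev,
    inv_mul_cancel_right₀ hc]

theorem scaledOrthProj_eq_iff (hβ : ⟪β, H⟫ ≠ 0) :
    scaledOrthProj H β = scaledOrthProj H α ↔ ∃ c : ℝ, β = c • α := by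
  refine ⟨fun h => ⟨⟪β, H⟫ * ⟪α, H⟫⁻¹, ?_⟩, ?_⟩
  · rw [scaledOrthProj, scaledOrthProj, sub_left_inj] at h
    rw [← smul_smul, ← h, smul_inv_smul₀ hβ]
  · rintro ⟨c, rfl⟩
    exact scaledOrthProj_smul (left_ne_zero_of_smul (ne_zero_of_inner_ne_zero_left hβ)) α

theorem scaledOrthProj_ne_zero (hα : ⟪α, H⟫ ≠ 0) (hH : ∀ c : ℝ, H ≠ c • α) :
    scaledOrthProj H α ≠ 0 := by
  intro h
  rw [scaledOrthProj, sub_eq_zero] at h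
  apply hH (‖H‖ ^ 2 * ⟪α, H⟫⁻¹)
  rw [← smul_smul, h, smul_inv_smul₀ (pow_ne_zero 2 (norm_ne_zero_iff.2
    (ne_zero_of_inner_ne_zero_right hα)))]

theorem norm_scaledOrthProj_sq (hα : ⟪α, H⟫ ≠ 0) :
    ‖scaledOrthProj H α‖ ^ 2 = (‖α‖ / ⟪α, H⟫) ^ 2 - (‖H‖ ^ 2)⁻¹ := by
  have hH : ‖H‖ ≠ 0 := norm_ne_zero_iff.2 (ne_zero_of_inner_ne_zero_right hα)
  rw [scaledOrthProj, norm_sub_sq_real, real_inner_smul_left, real_inner_smul_right,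
    norm_smul, norm_smul, Real.norm_eq_abs, Real.norm_eq_abs, mul_pow, mul_pow, sq_abs, sq_abs]
  field_simp
  ring

theorem scaledOrthProj_eq_neg_of_eq_smul_add {u w : V} {n : ℝ} (hu : ‖u‖ = 1) (hw : ‖w‖ = 1)
    (hH : H = n • (u + w)) (huH : ⟪u, H⟫ ≠ 0) :
    scaledOrthProj H w = -scaledOrthProj H u := by
  have hinner : ⟪w, H⟫ = ⟪u, H⟫ := by
    simp only [hH, real_inner_smul_right, inner_add_right, real_inner_self_eq_norm_sq, hu, hw,
      real_inner_comm u w]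
    ring
  have hnorm : ‖H‖ ^ 2 = 2 * n * ⟪u, H⟫ := by
    rw [← real_inner_self_eq_norm_sq, hH, real_inner_smul_left, inner_add_left, ← hH, hinner]
    ring
  have hn : n ≠ 0 := by rintro rfl; simp [hH] at huH
  rw [scaledOrthProj, scaledOrthProj, hinner, hnorm, hH]
  match_scalars <;> field_simp <;> ring

theorem exists_eq_smul_add_of_scaledOrthProj_eq_neg {u w : V} (hu : ‖u‖ = 1) (hw : ‖w‖ = 1)
    (huH : ⟪u, H⟫ ≠ 0) (hwH : ⟪w, H⟫ ≠ 0) (h : scaledOrthProj H w = -scaledOrthProj H u) :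
    ∃ n ε : ℝ, n ≠ 0 ∧ (ε = 1 ∨ ε = -1) ∧ H = n • (u + ε • w) := by
  have hsq : (⟪w, H⟫⁻¹) ^ 2 = (⟪u, H⟫⁻¹) ^ 2 := by
    have := congrArg (‖·‖ ^ 2) h
    simp only [norm_neg, norm_scaledOrthProj_sq huH, norm_scaledOrthProj_sq hwH, hu, hw,
      one_div, sub_left_inj] at this
    exact this
  obtain ⟨ε, hε, hεw⟩ : ∃ ε : ℝ, (ε = 1 ∨ ε = -1) ∧ ⟪w, H⟫⁻¹ = ε * ⟪u, H⟫⁻¹ := by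
    rcases sq_eq_sq_iff_eq_or_eq_neg.1 hsq with h' | h'
    exacts [⟨1, .inl rfl, by rw [h', one_mul]⟩, ⟨-1, .inr rfl, by rw [h', neg_one_mul]⟩]
  have hH : ‖H‖ ≠ 0 := norm_ne_zero_iff.2 (ne_zero_of_inner_ne_zero_right huH)
  refine ⟨‖H‖ ^ 2 / (2 * ⟪u, H⟫), ε, by positivity, hε, ?_⟩
  rw [scaledOrthProj, scaledOrthProj, hεw] at h
  linear_combination (norm := skip) (-(‖H‖ ^ 2 / 2)) • h
  match_scalars <;> field_simp <;> ring

theorem norm_inv_norm_smul_eq_one_and_inner_ne_zero (hα : ⟪α, H⟫ ≠ 0) :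
    ‖‖α‖⁻¹ • α‖ = 1 ∧ ⟪‖α‖⁻¹ • α, H⟫ ≠ 0 := by
  have hα0 := ne_zero_of_inner_ne_zero_left hα
  refine ⟨norm_smul_inv_norm hα0, ?_⟩
  rw [real_inner_smul_left]
  exact mul_ne_zero (inv_ne_zero (norm_ne_zero_iff.2 hα0)) hα

theorem scaledOrthProj_eq_neg_iff (hα : ⟪α, H⟫ ≠ 0) (hβ : ⟪β, H⟫ ≠ 0) :
    scaledOrthProj H β = -scaledOrthProj H α ↔
      ∃ n ε : ℝ, n ≠ 0 ∧ (ε = 1 ∨ ε = -1) ∧ H = n • (‖α‖⁻¹ • α + ε • ‖β‖⁻¹ • β) := by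
  have hα0 := norm_ne_zero_iff.2 (ne_zero_of_inner_ne_zero_left hα)
  have hβ0 := norm_ne_zero_iff.2 (ne_zero_of_inner_ne_zero_left hβ)
  obtain ⟨hu, huH⟩ := norm_inv_norm_smul_eq_one_and_inner_ne_zero hα
  obtain ⟨hw, hwH⟩ := norm_inv_norm_smul_eq_one_and_inner_ne_zero hβ
  rw [← scaledOrthProj_smul (inv_ne_zero hα0) α, ← scaledOrthProj_smul (inv_ne_zero hβ0) β]
  refine ⟨exists_eq_smul_add_of_scaledOrthProj_eq_neg hu hw huH hwH, ?_⟩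
  rintro ⟨n, ε, -, hε, hH⟩
  have hε0 : ε ≠ 0 := by rcases hε with rfl | rfl <;> norm_num
  have hεw : ‖ε • ‖β‖⁻¹ • β‖ = 1 := by
    rw [norm_smul, hw, mul_one]; rcases hε with rfl | rfl <;> norm_num
  rw [← scaledOrthProj_smul hε0]
  exact scaledOrthProj_eq_neg_of_eq_smul_add hu hεw hH huH

end ScaledOrthProj

theorem stmt_4_general {V : Type*} [NormedAddCommGroup V] [InnerProductSpace ℝ V]
    (Rp : Finset V)
    (m : V → ℕ) (hm : ∀ α ∈ Rp, 1 ≤ m α)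
    (H : V) (hprop : ∀ α ∈ Rp, ∀ c : ℝ, H ≠ c • α)
    (P : Finset V) (hP : P = Rp.filter fun α => ⟪α, H⟫ ≠ 0)
    (vH : V → V) (hvH : ∀ α, vH α = (⟪α, H⟫)⁻¹ • α - (‖H‖ ^ 2)⁻¹ • H)
    (AH : Multiset V)
    (hAH : AH = P.val.bind fun α => Multiset.replicate (m α) (vH α)) :
    AH.map (fun x => -x) = AH ↔
      ∃ f : V → V,
        (∀ α ∈ P, f α ∈ P) ∧
        (∀ α ∈ P, f α ≠ α) ∧
        (∀ α ∈ P, ∃ n ε : ℝ, n ≠ 0 ∧ (ε = 1 ∨ ε = -1) ∧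
          H = n • (‖α‖⁻¹ • α + ε • ‖f α‖⁻¹ • f α)) ∧
        (∀ α ∈ P,
          ∑ μ ∈ P.filter (fun μ => ∃ c : ℝ, μ = c • α), m μ
            = ∑ ν ∈ P.filter (fun ν => ∃ c : ℝ, ν = c • f α), m ν) := by
  have hPmem : ∀ α ∈ P, α ∈ Rp ∧ ⟪α, H⟫ ≠ 0 := fun α hα => by
    rwa [hP, Finset.mem_filter] at hα
  obtain rfl : vH = scaledOrthProj H := funext hvH
  have hline : ∀ α, ∑ μ ∈ P with scaledOrthProj H μ = scaledOrthProj H α, m μ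
      = ∑ μ ∈ P with ∃ c : ℝ, μ = c • α, m μ := fun α =>
    Finset.sum_congr (Finset.filter_congr fun μ hμ => scaledOrthProj_eq_iff (hPmem μ hμ).2)
      fun _ _ => rfl
  rw [hAH, Multiset.map_neg_bind_replicate_eq_self_iff P m fun α hα => hm α (hPmem α hα).1]
  constructor
  · rintro ⟨f, hfP, hfneg, hfsum⟩
    refine ⟨f, hfP, fun α hα hfα => ?_, fun α hα => ?_, fun α hα => ?_⟩
    · have hself := hfneg α hα
      rw [hfα, eq_neg_iff_add_eq_zero, ← two_smul ℝ, smul_eq_zero] at hself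
      exact scaledOrthProj_ne_zero (hPmem α hα).2 (hprop α (hPmem α hα).1)
        (hself.resolve_left two_ne_zero)
    · exact (scaledOrthProj_eq_neg_iff (hPmem α hα).2 (hPmem _ (hfP α hα)).2).1 (hfneg α hα)
    · rw [← hline α, ← hline (f α), hfsum α hα]
  · rintro ⟨f, hfP, -, hfH, hfsum⟩
    refine ⟨f, hfP, fun α hα => ?_, fun α hα => ?_⟩
    · exact (scaledOrthProj_eq_neg_iff (hPmem α hα).2 (hPmem _ (hfP α hα)).2).2 (hfH α hα)
    · rw [hline α, hline (f α), hfsum α hα]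

/-- Criterion for austerity of the orbit `Ad(K)H` (Lemma on austere orbits):
with `P = {α ∈ R₊ | ⟪α,H⟫ ≠ 0}` and `v_H(α) = α/⟪α,H⟫ - H/‖H‖²`, the
multiplicity-weighted multiset `A_H = {v_H(α) with multiplicity m(α)}` is
invariant under negation iff there is a fixed-point-free map `f : P → P` with
`H = n_α (α/‖α‖ + ε_α f(α)/‖f(α)‖)` and matching multiplicity sums along lines. -/
theorem stmt_4 {V : Type*} [NormedAddCommGroup V] [InnerProductSpace ℝ V]
    [FiniteDimensional ℝ V] (Rp : Finset V) (hR : ∀ α ∈ Rp, α ≠ 0)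
    (m : V → ℕ) (hm : ∀ α ∈ Rp, 1 ≤ m α)
    (H : V) (hH : H ≠ 0) (hprop : ∀ α ∈ Rp, ∀ c : ℝ, H ≠ c • α)
    (P : Finset V) (hP : P = Rp.filter fun α => ⟪α, H⟫ ≠ 0)
    (vH : V → V) (hvH : ∀ α, vH α = (⟪α, H⟫)⁻¹ • α - (‖H‖ ^ 2)⁻¹ • H)
    (AH : Multiset V)
    (hAH : AH = P.val.bind fun α => Multiset.replicate (m α) (vH α)) :
    AH.map (fun x => -x) = AH ↔
      ∃ f : V → V,
        (∀ α ∈ P, f α ∈ P) ∧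
        (∀ α ∈ P, f α ≠ α) ∧
        (∀ α ∈ P, ∃ n ε : ℝ, n ≠ 0 ∧ (ε = 1 ∨ ε = -1) ∧
          H = n • (‖α‖⁻¹ • α + ε • ‖f α‖⁻¹ • f α)) ∧
        (∀ α ∈ P,
          ∑ μ ∈ P.filter (fun μ => ∃ c : ℝ, μ = c • α), m μ
            = ∑ ν ∈ P.filter (fun ν => ∃ c : ℝ, ν = c • f α), m ν) :=
  stmt_4_general Rp m hm H hprop P hP vH hvH AH hAH
end

section
/- Let V be a finite-dimensional real inner product space, R₊ a finite set of nonzero vectors, and m : V → ℕ with m(α) ≥ 1 for α ∈ R₊. Let H ∈ V be nonzero and not proportional to any element of R₊, and set P = {α ∈ R₊ : ⟪α,H⟫ ≠ 0}. Assume in addition that no two distinct elements of P are proportional (i.e. α, β ∈ P and β ∈ ℝα imply α = β). Suppose f : P → P satisfies: f(α) ≠ α for all α, for every α ∈ P there exist n_α ≠ 0 and ε_α ∈ {1,−1} with H = n_α·(α/‖α‖ + ε_α·f(α)/‖f(α)‖), and Σ_{μ ∈ P, μ ∈ ℝα} m(μ) = Σ_{ν ∈ P, ν ∈ ℝ f(α)}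 m(ν) for all α ∈ P. Then m(α) = m(f(α)) for every α ∈ P, f ∘ f is the identity map of P, and the cardinality of P is even. -/
open scoped RealInnerProductSpace Classical

/-- A fixed-point-free involution on a finite set forces even cardinality. -/
lemma even_card_of_fpf_involution {α : Type*} [DecidableEq α] (P : Finset α) (f : α → α)
    (hfP : ∀ a ∈ P, f a ∈ P) (hfi : ∀ a ∈ P, f (f a) = a) (hne : ∀ a ∈ P, f a ≠ a) :
    Even P.card := by
  induction P using Finset.strongInduction with
  | _ P ih =>
    rcases P.eq_empty_or_nonempty with rfl | ⟨a, ha⟩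
    · simp
    · have hfa := hfP a ha
      have hane : f a ≠ a := hne a ha
      set Q := P \ {a, f a} with hQ
      have hQsub : Q ⊂ P := by
        apply Finset.sdiff_ssubset _ (by simp)
        intro x hx
        simp at hx
        rcases hx with rfl | rfl <;> assumption
      have hQP : ∀ b ∈ Q, b ∈ P := fun b hb => (Finset.mem_sdiff.mp hb).1
      have hmemQ : ∀ b ∈ Q, f b ∈ Q := by
        intro b hb
        rw [hQ, Finset.mem_sdiff] at hb ⊢
        obtain ⟨hbP, hbn⟩ := hb
        simp only [Finset.mem_insert, Finset.mem_singleton] at hbn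
        push_neg at hbn
        refine ⟨hfP b hbP, ?_⟩
        simp only [Finset.mem_insert, Finset.mem_singleton]
        push_neg
        constructor
        · intro h
          have : f a = b := by rw [← h, hfi b hbP]
          exact hbn.2 this.symm
        · intro h
          have : b = a := by
            calc b = f (f b) := (hfi b hbP).symm
            _ = f (f a) := by rw [h]
            _ = a := hfi a ha
          exact hbn.1 this
      have hsub : {a, f a} ⊆ P := by
        intro x hx; simp at hx; rcases hx with rfl | rfl <;> assumption
      have h2 : ({a, f a} : Finset α).card = 2 := by
        rw [Finset.card_insert_of_notMem (by simpa using (Ne.symm hane : a ≠ f a)),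
          Finset.card_singleton]
      have h2le : 2 ≤ P.card := h2 ▸ Finset.card_le_card hsub
      have hcard : P.card = Q.card + 2 := by
        rw [hQ, Finset.card_sdiff_of_subset hsub, h2]
        omega
      have hev : Even Q.card :=
        ih Q hQsub (fun b hb => hmemQ b hb) (fun b hb => hfi b (hQP b hb))
          (fun b hb => hne b (hQP b hb))
      rw [hcard]
      exact hev.add (even_iff_two_dvd.mpr ⟨1, rfl⟩)

/-- Addendum to the austerity criterion when no two distinct elements of `P` are
proportional (i.e. the restricted root system is not of type `BC`): any pairing
map `f` realizing the austere symmetry matches multiplicities (`m(α) = m(f(α))`),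
is an involution without fixed points, and `#P` is even. -/
theorem stmt_5 {V : Type*} [NormedAddCommGroup V] [InnerProductSpace ℝ V]
    [FiniteDimensional ℝ V] (Rp : Finset V) (hR : ∀ α ∈ Rp, α ≠ 0)
    (m : V → ℕ) (hm : ∀ α ∈ Rp, 1 ≤ m α)
    (H : V) (hH : H ≠ 0) (hprop : ∀ α ∈ Rp, ∀ c : ℝ, H ≠ c • α)
    (P : Finset V) (hP : P = Rp.filter fun α => ⟪α, H⟫ ≠ 0)
    (hnp : ∀ α ∈ P, ∀ β ∈ P, (∃ c : ℝ, β = c • α) → α = β)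
    (f : V → V) (hfP : ∀ α ∈ P, f α ∈ P) (hfne : ∀ α ∈ P, f α ≠ α)
    (hfeq : ∀ α ∈ P, ∃ n ε : ℝ, n ≠ 0 ∧ (ε = 1 ∨ ε = -1) ∧
      H = n • (‖α‖⁻¹ • α + ε • ‖f α‖⁻¹ • f α))
    (hfm : ∀ α ∈ P,
      ∑ μ ∈ P.filter (fun μ => ∃ c : ℝ, μ = c • α), m μ
        = ∑ ν ∈ P.filter (fun ν => ∃ c : ℝ, ν = c • f α), m ν) :
    (∀ α ∈ P, m α = m (f α)) ∧ (∀ α ∈ P, f (f α) = α) ∧ Even P.card := by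
  -- elements of P are nonzero
  have hP0 : ∀ α ∈ P, α ≠ 0 := by
    intro α hα
    rw [hP, Finset.mem_filter] at hα
    exact hR α hα.1
  -- the proportionality filter is a singleton
  have hsingle : ∀ α ∈ P, P.filter (fun μ => ∃ c : ℝ, μ = c • α) = {α} := by
    intro α hα
    ext μ
    simp only [Finset.mem_filter, Finset.mem_singleton]
    constructor
    · rintro ⟨hμ, c, rfl⟩
      exact (hnp α hα _ hμ ⟨c, rfl⟩).symm
    · rintro rfl
      exact ⟨hα, 1, (one_smul ℝ μ).symm⟩
  -- multiplicities match
  have hmult : ∀ α ∈ P, m α = m (f α) := by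
    intro α hα
    have := hfm α hα
    rw [hsingle α hα, hsingle (f α) (hfP α hα)] at this
    simpa using this
  -- the key involution property
  have hinv : ∀ α ∈ P, f (f α) = α := by
    intro α hα
    have hβ : f α ∈ P := hfP α hα
    have hγ : f (f α) ∈ P := hfP _ hβ
    obtain ⟨n, ε, hn, hε, h1⟩ := hfeq α hα
    obtain ⟨n', ε', hn', hε', h2⟩ := hfeq (f α) hβ
    set β := f α with hβdef
    set γ := f β with hγdef
    have hα0 : α ≠ 0 := hP0 α hα
    have hβ0 : β ≠ 0 := hP0 β hβ
    have hγ0 : γ ≠ 0 := hP0 γ hγ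
    set u : V := ‖α‖⁻¹ • α with hu_def
    set v : V := ‖β‖⁻¹ • β with hv_def
    set w : V := ‖γ‖⁻¹ • γ with hw_def
    have hnormu : ‖u‖ = 1 := by
      rw [hu_def, norm_smul, norm_inv, norm_norm, inv_mul_cancel₀ (norm_ne_zero_iff.mpr hα0)]
    have hnormv : ‖v‖ = 1 := by
      rw [hv_def, norm_smul, norm_inv, norm_norm, inv_mul_cancel₀ (norm_ne_zero_iff.mpr hβ0)]
    have hnormw : ‖w‖ = 1 := by
      rw [hw_def, norm_smul, norm_inv, norm_norm, inv_mul_cancel₀ (norm_ne_zero_iff.mpr hγ0)]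
    have hβu : β = ‖β‖ • v := (smul_inv_smul₀ (norm_ne_zero_iff.mpr hβ0) β).symm
    have hγw : γ = ‖γ‖ • w := (smul_inv_smul₀ (norm_ne_zero_iff.mpr hγ0) γ).symm
    -- β is not proportional to α (so u ≠ ± v)
    have hnotprop : ∀ s : ℝ, v ≠ s • u := by
      intro s hs
      apply hfne α hα
      have hprop' : β = (‖β‖ * (s * ‖α‖⁻¹)) • α := by
        calc β = ‖β‖ • v := hβu
        _ = ‖β‖ • (s • u) := by rw [hs]
        _ = ‖β‖ • (s • (‖α‖⁻¹ • α)) := by rw [hu_def]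
        _ = (‖β‖ * (s * ‖α‖⁻¹)) • α := by rw [smul_smul, smul_smul, mul_assoc]
      exact (hnp α hα β hβ ⟨_, hprop'⟩).symm
    -- the two expressions of H
    have h12 : n • (u + ε • v) = n' • (v + ε' • w) := by rw [← h1, ← h2]
    have heq : (n' * ε') • w = n • u + (n * ε - n') • v := by
      linear_combination (norm := module) -h12
    set c : ℝ := ⟪u, v⟫ with hc_def
    have hε2 : ε ^ 2 = 1 := by rcases hε with h | h <;> rw [h] <;> norm_num
    have hε'2 : ε' ^ 2 = 1 := by rcases hε' with h | h <;> rw [h] <;> norm_num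
    -- Cauchy–Schwarz strictness: 1 + c * ε ≠ 0
    have hcε : 1 + c * ε ≠ 0 := by
      intro h0
      rcases hε with h | h
      · -- c = -1, so u = -v
        rw [h, mul_one] at h0
        have hc1 : ⟪u, -v⟫ = 1 := by
          rw [inner_neg_right, ← hc_def]; linarith
        have huv := (inner_eq_one_iff_of_norm_eq_one (𝕜 := ℝ) hnormu (by rwa [norm_neg])).mp hc1
        exact hnotprop (-1) (by rw [huv]; simp)
      · -- c = 1, so u = v
        rw [h] at h0
        have hc1 : ⟪u, v⟫ = 1 := by rw [← hc_def]; linarith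
        have huv := (inner_eq_one_iff_of_norm_eq_one (𝕜 := ℝ) hnormu hnormv).mp hc1
        exact hnotprop 1 (by rw [huv]; simp)
    -- norm-squared equation
    have hE : (n' * ε') ^ 2 = n ^ 2 + (n * ε - n') ^ 2 + 2 * n * (n * ε - n') * c := by
      have hL : ⟪(n' * ε') • w, (n' * ε') • w⟫ = (n' * ε') ^ 2 := by
        simp only [real_inner_smul_left, real_inner_smul_right]
        simp only [real_inner_self_eq_norm_sq]
        rw [hnormw]; ring
      have hR' : ⟪n • u + (n * ε - n') • v, n • u + (n * ε - n') • v⟫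
          = n ^ 2 + (n * ε - n') ^ 2 + 2 * n * (n * ε - n') * c := by
        rw [real_inner_add_add_self]
        simp only [real_inner_smul_left, real_inner_smul_right]
        simp only [real_inner_self_eq_norm_sq]
        rw [hnormu, hnormv, ← hc_def]; ring
      rw [← hL, heq, hR']
    -- conclude n * ε - n' = 0
    have hfac : 2 * n * ((1 + c * ε) * (n - ε * n')) = 0 := by
      linear_combination (-1 : ℝ) * hE - (n ^ 2 + 2 * c * n * n') * hε2 + n' ^ 2 * hε'2
    have hzero : n * ε - n' = 0 := by
      have h1' : n - ε * n' = 0 := by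
        have h2n : (2 : ℝ) * n ≠ 0 := by simp [hn]
        rcases mul_eq_zero.mp hfac with h | h
        · exact absurd h h2n
        · rcases mul_eq_zero.mp h with h' | h'
          · exact absurd h' hcε
          · exact h'
      rcases hε with h | h <;> rw [h] at h1' ⊢ <;> linarith
    -- hence γ is proportional to α
    have hn'ε' : n' * ε' ≠ 0 := by
      rcases hε' with h | h <;> rw [h] <;> simpa using hn'
    have heq' : (n' * ε') • w = n • u := by
      rw [heq, hzero, zero_smul, add_zero]
    have hwu : w = ((n' * ε')⁻¹ * n) • u := by
      rw [← smul_smul, ← heq', inv_smul_smul₀ hn'ε']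
    have hγα : γ = (‖γ‖ * ((n' * ε')⁻¹ * n * ‖α‖⁻¹)) • α := by
      calc γ = ‖γ‖ • w := hγw
      _ = ‖γ‖ • (((n' * ε')⁻¹ * n) • u) := by rw [hwu]
      _ = ‖γ‖ • (((n' * ε')⁻¹ * n) • (‖α‖⁻¹ • α)) := by rw [hu_def]
      _ = (‖γ‖ * ((n' * ε')⁻¹ * n * ‖α‖⁻¹)) • α := by
          rw [smul_smul, smul_smul, mul_assoc]
    exact (hnp α hα γ hγ ⟨_, hγα⟩).symm
  exact ⟨hmult, hinv, even_card_of_fpf_involution P f hfP hinv hfne⟩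
end

section
/- Let l ≥ 2. In the space of 2l × 2l real matrices with the trace inner product ⟪X, Y⟫ = tr(Xᵀ Y), let H be the skew-symmetric matrix whose (1,2) entry is −1, whose (2,1) entry is 1, and all other entries 0; let 𝔞 be the set of block-diagonal skew-symmetric matrices with l diagonal 2×2 blocks of the form [[0, −t_k],[t_k, 0]] (t_k ∈ ℝ); and let s be the diagonal matrix whose (1,1) and (2,2) entries are 1 and whose (2k−1, 2k−1) entry is −1 and (2k,2k) entry is 1 for 2 ≤ k ≤ l. Define σ(X) = s X s. Then: σ(H) = H; σ(X) = −X for every X ∈ 𝔞 with ⟪X, H⟫ = 0; and σ maps the orbit O = {g H gᵀ : g a 2l × 2l real matrix with gᵀ g = 1 and det g = 1} onto itself. -/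
open Matrix

/-- For the symmetric pair `(SO(2l)×SO(2l), SO(2l)*)`: conjugation by
`s = diag(1,1,-1,1,…,-1,1)` fixes `H = e₁`, acts as `-1` on `𝔞 ∩ H^⊥`, and
preserves the adjoint orbit of `H` under `SO(2l)`; hence that orbit is weakly
reflective in the hypersphere of `𝔬(2l)` with the trace inner product. -/
theorem stmt_6 (l : ℕ) (hl : 2 ≤ l)
    (H s : Matrix (Fin (2 * l)) (Fin (2 * l)) ℝ)
    (hH : ∀ i j : Fin (2 * l), H i j =
      if i.val = 0 ∧ j.val = 1 then -1 else if i.val = 1 ∧ j.val = 0 then 1 else 0)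
    (hs : ∀ i j : Fin (2 * l), s i j =
      if i = j then (if i.val ≤ 1 ∨ i.val % 2 = 1 then (1 : ℝ) else -1) else 0)
    (a : Set (Matrix (Fin (2 * l)) (Fin (2 * l)) ℝ))
    (ha : a = {X | ∃ t : Fin l → ℝ, ∀ i j : Fin (2 * l), X i j =
      if i.val / 2 = j.val / 2 ∧ i.val % 2 = 0 ∧ j.val % 2 = 1 then
        -t ⟨i.val / 2, by have := i.isLt; omega⟩
      else if i.val / 2 = j.val / 2 ∧ i.val % 2 = 1 ∧ j.val % 2 = 0 then
        t ⟨i.val / 2, by have := i.isLt; omega⟩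
      else 0})
    (O : Set (Matrix (Fin (2 * l)) (Fin (2 * l)) ℝ))
    (hO : O = {X | ∃ g : Matrix (Fin (2 * l)) (Fin (2 * l)) ℝ,
      gᵀ * g = 1 ∧ g.det = 1 ∧ X = g * H * gᵀ})
    (σ : Matrix (Fin (2 * l)) (Fin (2 * l)) ℝ → Matrix (Fin (2 * l)) (Fin (2 * l)) ℝ)
    (hσ : ∀ X, σ X = s * X * s) :
    σ H = H ∧ (∀ X ∈ a, (Xᵀ * H).trace = 0 → σ X = -X) ∧ σ '' O = O := by
  -- the diagonal of s
  set d : Fin (2 * l) → ℝ := fun i => if i.val ≤ 1 ∨ i.val % 2 = 1 then (1 : ℝ) else -1 with hd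
  have hsd : s = Matrix.diagonal d := by
    ext i j
    rw [hs, Matrix.diagonal_apply]
  have hdd : ∀ i, d i * d i = 1 := by
    intro i; simp only [hd]; split_ifs <;> norm_num
  have hss : s * s = 1 := by
    rw [hsd, Matrix.diagonal_mul_diagonal]
    ext i j
    rw [Matrix.diagonal_apply, Matrix.one_apply]
    split_ifs with h
    · exact hdd i
    · rfl
  have hst : sᵀ = s := by rw [hsd, Matrix.diagonal_transpose]
  have happ : ∀ X : Matrix (Fin (2 * l)) (Fin (2 * l)) ℝ, ∀ i j,
      (s * X * s) i j = d i * X i j * d j := by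
    intro X i j
    rw [hsd, Matrix.mul_diagonal, Matrix.diagonal_mul]
  -- part 1
  have hσH : σ H = H := by
    rw [hσ]
    ext i j
    rw [happ, hH]
    split_ifs with h1 h2
    · have hdi : d i = 1 := by rw [hd]; simp; omega
      have hdj : d j = 1 := by rw [hd]; simp; omega
      rw [hdi, hdj]; ring
    · have hdi : d i = 1 := by rw [hd]; simp; omega
      have hdj : d j = 1 := by rw [hd]; simp; omega
      rw [hdi, hdj]; ring
    · ring
  refine ⟨hσH, ?_, ?_⟩
  · -- part 2
    intro X hX htr
    rw [ha] at hX
    obtain ⟨t, ht⟩ := hX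
    have h2l : 1 < 2 * l := by omega
    set i0 : Fin (2 * l) := ⟨0, by omega⟩ with hi0
    set i1 : Fin (2 * l) := ⟨1, by omega⟩ with hi1
    -- compute the trace
    have key : ∀ m k : Fin (2 * l), X m k * H m k =
        (if m = i0 ∧ k = i1 then -X i0 i1 else 0)
        + (if m = i1 ∧ k = i0 then X i1 i0 else 0) := by
      intro m k
      rw [hH]
      by_cases h1 : m.val = 0 ∧ k.val = 1
      · have hm : m = i0 := by apply Fin.ext; simpa using h1.1
        have hk : k = i1 := by apply Fin.ext; simpa using h1.2
        subst hm; subst hk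
        simp [hi0, hi1]
      · by_cases h2 : m.val = 1 ∧ k.val = 0
        · have hm : m = i1 := by apply Fin.ext; simpa using h2.1
          have hk : k = i0 := by apply Fin.ext; simpa using h2.2
          subst hm; subst hk
          simp [hi0, hi1]
        · have hm1 : ¬(m = i0 ∧ k = i1) := by
            rintro ⟨rfl, rfl⟩; exact h1 ⟨rfl, rfl⟩
          have hm2 : ¬(m = i1 ∧ k = i0) := by
            rintro ⟨rfl, rfl⟩; exact h2 ⟨rfl, rfl⟩
          rw [if_neg h1, if_neg h2, if_neg hm1, if_neg hm2]
          ring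
    have htr' : (Xᵀ * H).trace = -X i0 i1 + X i1 i0 := by
      rw [Matrix.trace]
      have : ∀ k : Fin (2 * l), (Xᵀ * H).diag k = ∑ m, X m k * H m k := by
        intro k
        rw [Matrix.diag_apply, Matrix.mul_apply]
        simp [Matrix.transpose_apply]
      rw [Finset.sum_congr rfl (fun k _ => this k)]
      simp only [key, Finset.sum_add_distrib, ite_and]
      simp [Finset.sum_ite_eq]
    have ht0 : t ⟨0, by omega⟩ = 0 := by
      have hX01 : X i0 i1 = -t ⟨0, by omega⟩ := by
        rw [ht i0 i1]; norm_num [hi0, hi1]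
      have hX10 : X i1 i0 = t ⟨0, by omega⟩ := by
        rw [ht i1 i0]; norm_num [hi0, hi1]
      rw [htr', hX01, hX10] at htr
      linarith
    rw [hσ]
    ext i j
    rw [happ, Matrix.neg_apply, ht i j]
    by_cases hc1 : i.val / 2 = j.val / 2 ∧ i.val % 2 = 0 ∧ j.val % 2 = 1
    · rw [if_pos hc1]
      by_cases h0 : i.val / 2 = 0
      · have : t ⟨i.val / 2, by have := i.isLt; omega⟩ = 0 := by
          have : (⟨i.val / 2, by have := i.isLt; omega⟩ : Fin l) = ⟨0, by omega⟩ := by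
            apply Fin.ext; simpa using h0
          rw [this, ht0]
        rw [this]; ring
      · have hdi : d i = -1 := by rw [hd]; simp; omega
        have hdj : d j = 1 := by rw [hd]; simp; omega
        rw [hdi, hdj]; ring
    · rw [if_neg hc1]
      by_cases hc2 : i.val / 2 = j.val / 2 ∧ i.val % 2 = 1 ∧ j.val % 2 = 0
      · rw [if_pos hc2]
        by_cases h0 : i.val / 2 = 0
        · have : t ⟨i.val / 2, by have := i.isLt; omega⟩ = 0 := by
            have : (⟨i.val / 2, by have := i.isLt; omega⟩ : Fin l) = ⟨0, by omega⟩ := by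
              apply Fin.ext; simpa using h0
            rw [this, ht0]
          rw [this]; ring
        · have hdi : d i = 1 := by rw [hd]; simp; omega
          have hdj : d j = -1 := by rw [hd]; simp; omega
          rw [hdi, hdj]; ring
      · rw [if_neg hc2]; ring
  · -- part 3
    have hsHs : s * H * s = H := by rw [← hσ]; exact hσH
    have hdets : s.det * s.det = 1 := by
      rw [← Matrix.det_mul, hss, Matrix.det_one]
    have hsub : ∀ X ∈ O, σ X ∈ O := by
      intro X hXO
      rw [hO] at hXO ⊢
      obtain ⟨g, hg1, hg2, hg3⟩ := hXO
      refine ⟨s * g * s, ?_, ?_, ?_⟩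
      · have : (s * g * s)ᵀ * (s * g * s) = s * (gᵀ * ((s * s) * g)) * s := by
          rw [Matrix.transpose_mul, Matrix.transpose_mul, hst]
          noncomm_ring
        rw [this, hss, Matrix.one_mul, hg1, Matrix.mul_one, hss]
      · rw [Matrix.det_mul, Matrix.det_mul, hg2]
        rw [mul_one]
        linarith [hdets]
      · have : (s * g * s) * H * (s * g * s)ᵀ = s * (g * (s * H * s) * gᵀ) * s := by
          rw [Matrix.transpose_mul, Matrix.transpose_mul, hst]
          noncomm_ring
        rw [hσ, hg3, this, hsHs]
    have hinv : ∀ X, σ (σ X) = X := by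
      intro X
      rw [hσ, hσ]
      have : s * (s * X * s) * s = (s * s) * X * (s * s) := by noncomm_ring
      rw [this, hss, Matrix.one_mul, Matrix.mul_one]
    apply Set.Subset.antisymm
    · rintro Y ⟨X, hXO, rfl⟩
      exact hsub X hXO
    · intro X hXO
      exact ⟨σ X, hsub X hXO, hinv X⟩
end

section
/- Let l ≥ 2. In the space of l × l real matrices with the trace inner product ⟪X, Y⟫ = tr(Xᵀ Y), let X₀ be the matrix whose (1,1) entry is 1 and all other entries 0, and let s be the diagonal matrix diag(1, −1, …, −1). Define σ(X) = s X. Then: σ(X₀) = X₀; σ(D) = −D for every diagonal matrix D whose (1,1) entry is 0; and σ maps the orbit O = {g₁ X₀ g₂ᵀ : g₁, g₂ l × l real matrices with g₁ᵀ g₁ = 1, det g₁ = 1, g₂ᵀ g₂ = 1, det g₂ = 1} onto itself. -/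
open Matrix

/-- For the symmetric pair `(SO(2l), SO(l)×SO(l))`: left multiplication by
`s = diag(1,-1,…,-1)` fixes `X₀ = E₁₁`, acts as `-1` on the diagonal matrices
with vanishing `(1,1)` entry, and preserves the orbit of `X₀` under the
`SO(l)×SO(l)`-action `(g₁,g₂)·X = g₁ X g₂ᵀ`; hence that orbit is weakly
reflective in the hypersphere of `M_l(ℝ)` with the trace inner product. -/
theorem stmt_7 (l : ℕ) (hl : 2 ≤ l)
    (X₀ s : Matrix (Fin l) (Fin l) ℝ)
    (hX₀ : ∀ i j : Fin l, X₀ i j = if i.val = 0 ∧ j.val = 0 then 1 else 0)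
    (hs : ∀ i j : Fin l, s i j =
      if i = j then (if i.val = 0 then (1 : ℝ) else -1) else 0)
    (O : Set (Matrix (Fin l) (Fin l) ℝ))
    (hO : O = {X | ∃ g₁ g₂ : Matrix (Fin l) (Fin l) ℝ,
      g₁ᵀ * g₁ = 1 ∧ g₁.det = 1 ∧ g₂ᵀ * g₂ = 1 ∧ g₂.det = 1 ∧ X = g₁ * X₀ * g₂ᵀ})
    (σ : Matrix (Fin l) (Fin l) ℝ → Matrix (Fin l) (Fin l) ℝ)
    (hσ : ∀ X, σ X = s * X) :
    σ X₀ = X₀ ∧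
    (∀ D : Matrix (Fin l) (Fin l) ℝ, (∀ i j, i ≠ j → D i j = 0) →
      (∀ i j : Fin l, i.val = 0 → j.val = 0 → D i j = 0) → σ D = -D) ∧
    σ '' O = O := by
  -- s is "diagonal": multiplication picks out the diagonal entry
  have hmul : ∀ (X : Matrix (Fin l) (Fin l) ℝ) (i j : Fin l),
      (s * X) i j = (if i.val = 0 then (1:ℝ) else -1) * X i j := by
    intro X i j
    rw [Matrix.mul_apply]
    rw [Finset.sum_eq_single i]
    · rw [hs]; simp
    · intro k _ hk
      rw [hs]
      simp [hk.symm]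
    · simp
  have hsT : sᵀ = s := by
    ext i j
    rw [Matrix.transpose_apply, hs, hs]
    by_cases h : i = j <;> simp [h, eq_comm]
  have hss : s * s = 1 := by
    ext i j
    rw [hmul, hs, Matrix.one_apply]
    by_cases h : i = j
    · subst h; split_ifs <;> norm_num
    · simp [h]
  have hsX : s * X₀ = X₀ := by
    ext i j
    rw [hmul, hX₀]
    by_cases h0 : i.val = 0 <;> simp [h0]
  have hσσ : ∀ X, σ (σ X) = X := by
    intro X
    rw [hσ, hσ, ← Matrix.mul_assoc, hss, Matrix.one_mul]
  -- σ maps O into O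
  have hmem : ∀ X ∈ O, σ X ∈ O := by
    intro X hX
    rw [hO] at hX ⊢
    obtain ⟨g₁, g₂, ho1, hd1, ho2, hd2, rfl⟩ := hX
    refine ⟨s * g₁ * s, g₂, ?_, ?_, ho2, hd2, ?_⟩
    · simp only [Matrix.transpose_mul, hsT, Matrix.mul_assoc]
      rw [← Matrix.mul_assoc s s (g₁ * s), hss, Matrix.one_mul,
        ← Matrix.mul_assoc g₁ᵀ g₁ s, ho1, Matrix.one_mul, hss]
    · have : (s * g₁ * s).det = s.det * g₁.det * s.det := by
        rw [Matrix.det_mul, Matrix.det_mul]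
      rw [this, hd1, mul_one, ← Matrix.det_mul, hss, Matrix.det_one]
    · rw [hσ]
      simp only [Matrix.mul_assoc]
      rw [← Matrix.mul_assoc s X₀ g₂ᵀ, hsX]
  refine ⟨?_, ?_, ?_⟩
  · rw [hσ, hsX]
  · intro D hoff h00
    ext i j
    rw [hσ, hmul, Matrix.neg_apply]
    by_cases h : i = j
    · subst h
      by_cases h0 : i.val = 0
      · rw [h00 i i h0 h0]; simp
      · simp [h0]
    · rw [hoff i j h]; simp
  · apply Set.Subset.antisymm
    · rintro _ ⟨X, hX, rfl⟩
      exact hmem X hX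
    · intro X hX
      exact ⟨σ X, hmem X hX, hσσ X⟩
end

section
/- Let l ≥ 4 and let R₊ = {e_i − e_j : 1 ≤ i < j ≤ l} ∪ {e_i + e_j : 1 ≤ i < j ≤ l} ⊂ ℝ^l (the positive roots of type D_l). Let H ∈ ℝ^l be nonzero and not proportional to any element of R₊. For α ∈ R₊ with ⟪α,H⟫ ≠ 0 set v_H(α) = α/⟪α,H⟫ − H/‖H‖², and let S_H = {v_H(α) : α ∈ R₊, ⟪α,H⟫ ≠ 0}. Then S_H = −S_H if and only if either (a) there exist a permutation τ of {1,…,l}, signs ε ∈ {1,−1}^l, and c ≠ 0 with H_i = c·ε_i·w_{τ(i)} for all i, where w = e₁ = (1, 0, …, 0); or (b) l = 4 and there exist a permutation τ of {1,2,3,4}, signs ε ∈ {1,−1}⁴, and c ≠ 0 with H_i = c·ε_i·w_{τ(i)} for all i, where w = (1, 1, 1, 1). -/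
/-!
For the reflection `s_H` in `H^⊥` one has `⟪-s_H α, H⟫ = ⟪α, H⟫` and `v_H(-s_H α) = -v_H(α)`, so
`S_H = -S_H` as soon as `s_H` preserves the root system. This is the case when `H` is a multiple
of a coordinate vector (`s_H` flips one coordinate), and for `l = 4` when all `|H_i|` are equal.

Conversely, `-v_H(α) = v_H(β)` means `α / ⟪α, H⟫ + β / ⟪β, H⟫ = 2 H / ‖H‖²`, and a root has only
two nonzero coordinates. If some `H_e` vanishes, pairing `e_a + e_e` (with `H_a ≠ 0`) shows that
`H` has a single nonzero coordinate unless it is proportional to a root. If no coordinate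
vanishes, pairing `e_a ± e_b` puts every other coordinate into the support of a single root, so
`l = 4` and the partner root lives off `{a, b}`, which forces `|H_a| = |H_b|`.
-/

open scoped RealInnerProductSpace Pointwise

section Curvature

-- `curvatureVec H α` is `v_H(α)` and `curvatureSet R H` is `S_H`.

variable {E : Type*} [NormedAddCommGroup E] [InnerProductSpace ℝ E]

noncomputable def curvatureVec (H α : E) : E := ⟪α, H⟫⁻¹ • α - (‖H‖ ^ 2)⁻¹ • H

def curvatureSet (R : Set E) (H : E) : Set E :=
  {y | ∃ α ∈ R, ⟪α, H⟫ ≠ 0 ∧ y = curvatureVec H α}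

theorem curvatureVec_smul {H α : E} {c : ℝ} (hc : c ≠ 0) :
    curvatureVec H (c • α) = curvatureVec H α := by
  rw [curvatureVec, curvatureVec, real_inner_smul_left, smul_smul, mul_inv, mul_right_comm,
    inv_mul_cancel₀ hc, one_mul]

theorem curvatureSet_eq_of_forall_exists_smul {R R' : Set E} (H : E) (hRR' : R ⊆ R')
    (h : ∀ α ∈ R', ∃ β ∈ R, ∃ c : ℝ, c ≠ 0 ∧ α = c • β) :
    curvatureSet R H = curvatureSet R' H := by
  refine Set.Subset.antisymm (fun y ⟨α, hα, hαH, hy⟩ => ⟨α, hRR' hα, hαH, hy⟩) ?_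
  rintro y ⟨α, hα, hαH, rfl⟩
  obtain ⟨β, hβ, c, hc, rfl⟩ := h α hα
  rw [real_inner_smul_left] at hαH
  exact ⟨β, hβ, right_ne_zero_of_mul hαH, curvatureVec_smul hc⟩

-- `(2 * ⟪α, H⟫ / ‖H‖ ^ 2) • H - α` is `-s_H α`.
theorem neg_curvatureSet_subset_of_reflection {R : Set E} {H : E} (hH : H ≠ 0)
    (hR : ∀ α ∈ R, ⟪α, H⟫ ≠ 0 → (2 * ⟪α, H⟫ / ‖H‖ ^ 2) • H - α ∈ R) :
    -curvatureSet R H ⊆ curvatureSet R H := by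
  rintro y ⟨α, hα, hαH, hy⟩
  have hN : ‖H‖ ^ 2 ≠ 0 := by positivity
  have hβH : ⟪(2 * ⟪α, H⟫ / ‖H‖ ^ 2) • H - α, H⟫ = ⟪α, H⟫ := by
    rw [inner_sub_left, real_inner_smul_left, real_inner_self_eq_norm_sq]
    field_simp
    ring
  refine ⟨_, hR α hα hαH, hβH.symm ▸ hαH, ?_⟩
  rw [← neg_neg y, hy, curvatureVec, curvatureVec, hβH, smul_sub, smul_smul,
    show ⟪α, H⟫⁻¹ * (2 * ⟪α, H⟫ / ‖H‖ ^ 2) = 2 * (‖H‖ ^ 2)⁻¹ by field_simp]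
  module

end Curvature

theorem exists_partner_apply {ι : Type*} [Fintype ι] {R : Set (EuclideanSpace ℝ ι)}
    {H α : EuclideanSpace ℝ ι} (hsym : -curvatureSet R H ⊆ curvatureSet R H) (hα : α ∈ R)
    (hαH : ⟪α, H⟫ ≠ 0) :
    ∃ β ∈ R, ⟪β, H⟫ ≠ 0 ∧ ∀ k, α k / ⟪α, H⟫ + β k / ⟪β, H⟫ = 2 * H k / ‖H‖ ^ 2 := by
  obtain ⟨β, hβ, hβH, hαβ⟩ := hsym (Set.neg_mem_neg.2 ⟨α, hα, hαH, rfl⟩)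
  refine ⟨β, hβ, hβH, fun k => ?_⟩
  have hk := congrArg (· k) hαβ
  simp only [curvatureVec, PiLp.neg_apply, PiLp.sub_apply, PiLp.smul_apply, smul_eq_mul] at hk
  linear_combination -hk

section RootsD

variable {ι : Type*} [DecidableEq ι]

noncomputable def rootD (i j : ι) (s t : ℝ) : EuclideanSpace ℝ ι :=
  s • EuclideanSpace.single i 1 + t • EuclideanSpace.single j 1

variable (ι) in
def rootsD : Set (EuclideanSpace ℝ ι) :=
  {α | ∃ i j, i ≠ j ∧ ∃ s t : ℝ, (s = 1 ∨ s = -1) ∧ (t = 1 ∨ t = -1) ∧ α = rootD i j s t}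

variable (ι) in
def posRootsD [LinearOrder ι] : Set (EuclideanSpace ℝ ι) :=
  {x | ∃ i j : ι, i < j ∧
    (x = EuclideanSpace.single i (1 : ℝ) - EuclideanSpace.single j 1 ∨
     x = EuclideanSpace.single i (1 : ℝ) + EuclideanSpace.single j 1)}

@[simp]
theorem rootD_apply (i j : ι) (s t : ℝ) (k : ι) :
    rootD i j s t k = (if k = i then s else 0) + (if k = j then t else 0) := by
  simp [rootD, PiLp.single_apply]

theorem inner_rootD [Fintype ι] (i j : ι) (s t : ℝ) (H : EuclideanSpace ℝ ι) :
    ⟪rootD i j s t, H⟫ = s * H i + t * H j := by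
  simp [rootD, inner_add_left, real_inner_smul_left, EuclideanSpace.inner_single_left]

theorem rootD_comm (i j : ι) (s t : ℝ) : rootD i j s t = rootD j i t s :=
  add_comm _ _

theorem posRootsD_subset_rootsD [LinearOrder ι] : posRootsD ι ⊆ rootsD ι := by
  rintro x ⟨i, j, hij, rfl | rfl⟩
  · exact ⟨i, j, hij.ne, 1, -1, .inl rfl, .inr rfl, by simp [rootD, sub_eq_add_neg]⟩
  · exact ⟨i, j, hij.ne, 1, 1, .inl rfl, .inl rfl, by simp [rootD]⟩

theorem exists_mem_posRootsD_smul_eq [LinearOrder ι] {α : EuclideanSpace ℝ ι}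
    (hα : α ∈ rootsD ι) : ∃ β ∈ posRootsD ι, ∃ c : ℝ, c ≠ 0 ∧ α = c • β := by
  have key : ∀ i j : ι, i < j → ∀ s t : ℝ, (s = 1 ∨ s = -1) → (t = 1 ∨ t = -1) →
      ∃ β ∈ posRootsD ι, ∃ c : ℝ, c ≠ 0 ∧ rootD i j s t = c • β := by
    intro i j hij s t hs ht
    rcases hs with rfl | rfl <;> rcases ht with rfl | rfl
    · exact ⟨_, ⟨i, j, hij, .inr rfl⟩, 1, one_ne_zero, by rw [rootD]; module⟩
    · exact ⟨_, ⟨i, j, hij, .inl rfl⟩, 1, one_ne_zero, by rw [rootD]; module⟩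
    · exact ⟨_, ⟨i, j, hij, .inl rfl⟩, -1, by norm_num, by rw [rootD]; module⟩
    · exact ⟨_, ⟨i, j, hij, .inr rfl⟩, -1, by norm_num, by rw [rootD]; module⟩
  obtain ⟨i, j, hij, s, t, hs, ht, rfl⟩ := hα
  rcases hij.lt_or_gt with h | h
  · exact key i j h s t hs ht
  · rw [rootD_comm]
    exact key j i h t s ht hs

theorem curvatureSet_posRootsD [Fintype ι] [LinearOrder ι] (H : EuclideanSpace ℝ ι) :
    curvatureSet (posRootsD ι) H = curvatureSet (rootsD ι) H :=
  curvatureSet_eq_of_forall_exists_smul H posRootsD_subset_rootsD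
    fun _ => exists_mem_posRootsD_smul_eq

theorem apply_eq_zero_of_mem_rootsD {β : EuclideanSpace ℝ ι} (hβ : β ∈ rootsD ι) {x y k : ι}
    (hxy : x ≠ y) (hx : β x ≠ 0) (hy : β y ≠ 0) (hkx : k ≠ x) (hky : k ≠ y) : β k = 0 := by
  obtain ⟨i, j, -, s, t, -, -, rfl⟩ := hβ
  have hsupp : ∀ m, rootD i j s t m ≠ 0 → m = i ∨ m = j := by
    intro m hm
    by_contra! h
    simp [h.1, h.2] at hm
  by_contra hk
  rcases hsupp x hx with rfl | rfl <;> rcases hsupp y hy with rfl | rfl <;>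
    rcases hsupp k hk with rfl | rfl <;> simp_all

theorem exists_mem_rootsD_eq_smul {H : EuclideanSpace ℝ ι} {a b : ι} (hba : b ≠ a)
    (ha : H a ≠ 0) (hsq : H b ^ 2 = H a ^ 2) (h0 : ∀ k, k ≠ a → k ≠ b → H k = 0) :
    ∃ α ∈ rootsD ι, H = H a • α := by
  have hsign : H b / H a = 1 ∨ H b / H a = -1 := by
    rw [← mul_self_eq_one_iff, div_mul_div_comm, div_eq_one_iff_eq (mul_ne_zero ha ha)]
    linear_combination hsq
  refine ⟨rootD a b 1 (H b / H a), ⟨a, b, hba.symm, 1, _, .inl rfl, hsign, rfl⟩, ?_⟩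
  ext k
  rcases eq_or_ne k a with rfl | hka
  · simp [hba.symm]
  rcases eq_or_ne k b with rfl | hkb
  · simp [hka, mul_div_cancel₀ _ ha]
  · simp [hka, hkb, h0 k hka hkb]

end RootsD

section Counting

variable {ι : Type*} [Fintype ι] [DecidableEq ι]

theorem exists_ne_ne_of_four_le_card (hι : 4 ≤ Fintype.card ι) (a b : ι) :
    ∃ p q : ι, p ≠ q ∧ p ≠ a ∧ p ≠ b ∧ q ≠ a ∧ q ≠ b := by
  have h2 : 1 < (Finset.univ \ {a, b} : Finset ι).card := by
    have := Finset.le_card_sdiff {a, b} (Finset.univ : Finset ι)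
    have := Finset.card_le_two (a := a) (b := b)
    rw [Finset.card_univ] at *
    omega
  obtain ⟨p, hp, q, hq, hpq⟩ := Finset.one_lt_card.1 h2
  simp only [Finset.mem_sdiff, Finset.mem_univ, Finset.mem_insert, Finset.mem_singleton,
    true_and, not_or] at hp hq
  exact ⟨p, q, hpq, hp.1, hp.2, hq.1, hq.2⟩

theorem card_le_four_of_forall_eq_or {a b c d : ι}
    (h : ∀ k, k ≠ a → k ≠ b → k = c ∨ k = d) : Fintype.card ι ≤ 4 := by
  refine (Finset.card_le_card (t := {a, b, c, d}) fun k _ => ?_).trans Finset.card_le_four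
  by_cases hka : k = a
  · simp [hka]
  by_cases hkb : k = b
  · simp [hkb]
  rcases h k hka hkb with rfl | rfl <;> simp

theorem exists_ne_ne_forall_eq_or_of_card_eq_four (hι : Fintype.card ι = 4) {a b : ι}
    (hab : a ≠ b) : ∃ p q : ι, p ≠ q ∧ p ≠ a ∧ p ≠ b ∧ q ≠ a ∧ q ≠ b ∧
      ∀ k, k = a ∨ k = b ∨ k = p ∨ k = q := by
  have h2 : (Finset.univ \ {a, b} : Finset ι).card = 2 := by
    rw [Finset.card_sdiff_of_subset (Finset.subset_univ _), Finset.card_univ, hι,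
      Finset.card_pair hab]
  obtain ⟨p, q, hpq, hset⟩ := Finset.card_eq_two.1 h2
  have hmem : ∀ k, k ∉ ({a, b} : Finset ι) ↔ k = p ∨ k = q := fun k => by
    simpa using Finset.ext_iff.1 hset k
  simp only [Finset.mem_insert, Finset.mem_singleton, not_or] at hmem
  refine ⟨p, q, hpq, ((hmem p).2 (.inl rfl)).1, ((hmem p).2 (.inl rfl)).2,
    ((hmem q).2 (.inr rfl)).1, ((hmem q).2 (.inr rfl)).2, fun k => ?_⟩
  by_cases hka : k = a
  · exact .inl hka
  by_cases hkb : k = b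
  · exact .inr (.inl hkb)
  exact .inr (.inr ((hmem k).1 ⟨hka, hkb⟩))

end Counting

section Forward

variable {ι : Type*} [Fintype ι] {H : EuclideanSpace ℝ ι}

theorem norm_sq_ne_zero_of_apply_ne_zero {a : ι} (ha : H a ≠ 0) : ‖H‖ ^ 2 ≠ 0 := by
  have : H ≠ 0 := fun h => ha (by simp [h])
  positivity

variable [DecidableEq ι]

theorem apply_eq_zero_of_neg_curvatureSet_subset
    (hsym : -curvatureSet (rootsD ι) H ⊆ curvatureSet (rootsD ι) H)
    (hprop : ∀ α ∈ rootsD ι, ∀ c : ℝ, H ≠ c • α) {a e b : ι} (ha : H a ≠ 0) (he : H e = 0)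
    (hba : b ≠ a) : H b = 0 := by
  by_contra hb
  have hae : a ≠ e := fun h => ha (h ▸ he)
  have hbe : b ≠ e := fun h => hb (h ▸ he)
  have hN := norm_sq_ne_zero_of_apply_ne_zero ha
  obtain ⟨β, hβ, hβH, hsum⟩ := exists_partner_apply hsym
    ⟨a, e, hae, 1, 1, .inl rfl, .inl rfl, rfl⟩ (by simpa [inner_rootD, he] using ha)
  simp only [rootD_apply, inner_rootD, he, mul_zero, add_zero, one_mul] at hsum
  have hβe : β e ≠ 0 := fun h => by
    have := hsum e
    simp [hae.symm, h, he] at this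
    exact ha this
  have hβb : β b ≠ 0 := fun h => by
    have := hsum b
    simp [hba, hbe, h] at this
    exact hb (by simpa [hN] using this.symm)
  have hβ0 : ∀ k, k ≠ b → k ≠ e → β k = 0 := fun k => apply_eq_zero_of_mem_rootsD hβ hbe hβb hβe
  have hHk : ∀ k, k ≠ a → k ≠ b → H k = 0 := by
    intro k hka hkb
    rcases eq_or_ne k e with rfl | hke
    · exact he
    have := hsum k
    simp [hka, hke, hβ0 k hkb hke] at this
    simpa [hN] using this.symm
  have hNa : ‖H‖ ^ 2 = 2 * H a ^ 2 := by
    have := hsum a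
    simp [hae, hβ0 a hba.symm hae] at this
    rw [eq_div_iff hN, inv_mul_eq_iff_eq_mul₀ ha] at this
    linear_combination this
  have hNab : ‖H‖ ^ 2 = H a ^ 2 + H b ^ 2 := by
    rw [EuclideanSpace.real_norm_sq_eq,
      Fintype.sum_eq_add a b hba.symm fun k hk => by simp [hHk k hk.1 hk.2]]
  obtain ⟨α, hα, hHα⟩ := exists_mem_rootsD_eq_smul hba ha (by linarith) hHk
  exact hprop α hα _ hHα

theorem card_eq_four_of_neg_curvatureSet_subset (hι : 4 ≤ Fintype.card ι)
    (hsym : -curvatureSet (rootsD ι) H ⊆ curvatureSet (rootsD ι) H) (hH : ∀ k, H k ≠ 0)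
    {a b : ι} (hab : a ≠ b) : Fintype.card ι = 4 ∧ (H b = H a ∨ H b = -H a) := by
  obtain ⟨σ, hσ, ht⟩ : ∃ σ : ℝ, (σ = 1 ∨ σ = -1) ∧ H a + σ * H b ≠ 0 := by
    by_cases h : H a + H b = 0
    · exact ⟨-1, .inr rfl, fun h' => hH a (by linarith)⟩
    · exact ⟨1, .inl rfl, by simpa using h⟩
  have hN := norm_sq_ne_zero_of_apply_ne_zero (hH a)
  obtain ⟨β, hβ, hβH, hsum⟩ := exists_partner_apply hsym
    ⟨a, b, hab, 1, σ, .inl rfl, hσ, rfl⟩ (by simpa [inner_rootD] using ht)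
  simp only [rootD_apply, inner_rootD, one_mul] at hsum
  have hβ_out : ∀ k, k ≠ a → k ≠ b → β k ≠ 0 := fun k hka hkb h => by
    have := hsum k
    simp [hka, hkb, h] at this
    exact hH k (by simpa [hN] using this.symm)
  obtain ⟨p, q, hpq, hpa, hpb, hqa, hqb⟩ := exists_ne_ne_of_four_le_card hι a b
  have hβpq : ∀ k, k ≠ p → k ≠ q → β k = 0 :=
    fun k => apply_eq_zero_of_mem_rootsD hβ hpq (hβ_out p hpa hpb) (hβ_out q hqa hqb)
  refine ⟨le_antisymm (card_le_four_of_forall_eq_or (a := a) (b := b) (c := p) (d := q)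
    fun k hka hkb => ?_) hι, ?_⟩
  · by_contra! h
    exact hβ_out k hka hkb (hβpq k h.1 h.2)
  · have ea := hsum a
    have eb := hsum b
    simp [hab, hab.symm, hβpq a hpa.symm hqa.symm, hβpq b hpb.symm hqb.symm] at ea eb
    have hba : 2 * H b / ‖H‖ ^ 2 = σ * (2 * H a / ‖H‖ ^ 2) := by rw [← ea, ← eb, div_eq_mul_inv]
    rw [mul_div_assoc', div_left_inj' hN] at hba
    rcases hσ with rfl | rfl
    · exact .inl (by linarith)
    · exact .inr (by linarith)

theorem exists_single_or_card_eq_four_of_neg_curvatureSet_subset (hι : 4 ≤ Fintype.card ι)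
    (hH : H ≠ 0) (hprop : ∀ α ∈ rootsD ι, ∀ c : ℝ, H ≠ c • α)
    (hsym : -curvatureSet (rootsD ι) H ⊆ curvatureSet (rootsD ι) H) :
    (∃ p, H p ≠ 0 ∧ ∀ k, k ≠ p → H k = 0) ∨
      (Fintype.card ι = 4 ∧ ∃ c : ℝ, c ≠ 0 ∧ ∀ k, H k = c ∨ H k = -c) := by
  obtain ⟨a, ha⟩ : ∃ a, H a ≠ 0 := by
    by_contra! h
    exact hH (by ext k; simp [h k])
  by_cases hz : ∃ e, H e = 0
  · obtain ⟨e, he⟩ := hz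
    exact .inl ⟨a, ha, fun k hk => apply_eq_zero_of_neg_curvatureSet_subset hsym hprop ha he hk⟩
  push Not at hz
  obtain ⟨b, -, -, hba, -, -, -⟩ := exists_ne_ne_of_four_le_card hι a a
  refine .inr ⟨(card_eq_four_of_neg_curvatureSet_subset hι hsym hz hba.symm).1, H a, ha,
    fun k => ?_⟩
  rcases eq_or_ne k a with rfl | hka
  · exact .inl rfl
  · exact (card_eq_four_of_neg_curvatureSet_subset hι hsym hz hka.symm).2

end Forward

section Backward

variable {ι : Type*} [Fintype ι] [DecidableEq ι] {H : EuclideanSpace ℝ ι}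

theorem neg_curvatureSet_subset_of_single {p : ι} (hp : H p ≠ 0) (h0 : ∀ k, k ≠ p → H k = 0) :
    -curvatureSet (rootsD ι) H ⊆ curvatureSet (rootsD ι) H := by
  have hHp : H = H p • EuclideanSpace.single p 1 := by
    ext k
    by_cases hk : k = p <;> simp [hk, h0]
  have hrefl : ∀ α : EuclideanSpace ℝ ι,
      (2 * ⟪α, H⟫ / ‖H‖ ^ 2) • H = (2 * α p) • EuclideanSpace.single p 1 := fun α => by
    rw [hHp, real_inner_smul_right, EuclideanSpace.inner_single_right, norm_smul,
      PiLp.norm_single, smul_smul]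
    congr 1
    simp only [norm_one, mul_one, one_mul, Real.norm_eq_abs, sq_abs, conj_trivial]
    field_simp
  have hneg : ∀ x : ℝ, (x = 1 ∨ x = -1) → -x = 1 ∨ -x = -1 := by
    rintro x (rfl | rfl) <;> norm_num
  refine neg_curvatureSet_subset_of_reflection (fun h => hp (by simp [h])) ?_
  rintro _ ⟨i, j, hij, s, t, hs, ht, rfl⟩ -
  rw [hrefl]
  rcases eq_or_ne i p with rfl | hip
  · refine ⟨i, j, hij, s, -t, hs, hneg t ht, ?_⟩
    simp only [rootD_apply, if_pos, if_neg hij]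
    rw [rootD, rootD]
    module
  rcases eq_or_ne j p with rfl | hjp
  · refine ⟨i, j, hij, -s, t, hneg s hs, ht, ?_⟩
    simp only [rootD_apply, if_pos, if_neg hij.symm]
    rw [rootD, rootD]
    module
  · refine ⟨i, j, hij, -s, -t, hneg s hs, hneg t ht, ?_⟩
    simp only [rootD_apply, if_neg hip.symm, if_neg hjp.symm]
    rw [rootD, rootD]
    module

theorem neg_curvatureSet_subset_of_card_eq_four (hι : Fintype.card ι = 4) {c : ℝ} (hc : c ≠ 0)
    (hH : ∀ k, H k = c ∨ H k = -c) :
    -curvatureSet (rootsD ι) H ⊆ curvatureSet (rootsD ι) H := by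
  have hsq : ∀ k, H k ^ 2 = c ^ 2 := fun k => by rcases hH k with h | h <;> simp [h]
  have hN : ‖H‖ ^ 2 = 4 * c ^ 2 := by simp [EuclideanSpace.real_norm_sq_eq, hsq, hι]
  obtain ⟨k₀⟩ : Nonempty ι := Fintype.card_pos_iff.1 (by omega)
  refine neg_curvatureSet_subset_of_reflection ?_ ?_
  · have : H k₀ ^ 2 ≠ 0 := by rw [hsq]; positivity
    exact fun h => this (by simp [h])
  rintro _ ⟨i, j, hij, s, t, hs, ht, rfl⟩ hαH
  rw [inner_rootD] at hαH
  have hs2 : s ^ 2 = 1 := by rcases hs with rfl | rfl <;> norm_num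
  have ht2 : t ^ 2 = 1 := by rcases ht with rfl | rfl <;> norm_num
  have hji : t * H j = s * H i := by
    have : (t * H j - s * H i) * (t * H j + s * H i) = 0 := by
      linear_combination c ^ 2 * ht2 - c ^ 2 * hs2 + t ^ 2 * hsq j - s ^ 2 * hsq i
    rcases mul_eq_zero.1 this with h | h
    · linarith
    · exact absurd (by linarith) hαH
  obtain ⟨p, q, hpq, hpi, hpj, hqi, hqj, hcover⟩ :=
    exists_ne_ne_forall_eq_or_of_card_eq_four hι hij
  have hsign : ∀ k, s * H i * H k / c ^ 2 = 1 ∨ s * H i * H k / c ^ 2 = -1 := fun k => by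
    rw [← mul_self_eq_one_iff]
    field_simp
    linear_combination H i ^ 2 * H k ^ 2 * hs2 + H k ^ 2 * hsq i + c ^ 2 * hsq k
  refine ⟨p, q, hpq, _, _, hsign p, hsign q, ?_⟩
  ext k
  simp only [PiLp.sub_apply, PiLp.smul_apply, smul_eq_mul, rootD_apply, inner_rootD, hN]
  rcases hcover k with rfl | rfl | rfl | rfl
  all_goals simp [*, hpi.symm, hqi.symm, hpj.symm, hqj.symm, hij.symm, hpq.symm]
  all_goals field_simp
  · linear_combination 4 * s * hsq k
  · linear_combination (-4 * H k) * hji + 4 * t * hsq k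
  · ring
  · ring

end Backward

theorem exists_perm_sign_single_iff {l : ℕ} (hl : 0 < l) (x : Fin l → ℝ) :
    (∃ τ : Equiv.Perm (Fin l), ∃ ε : Fin l → ℝ, (∀ i, ε i = 1 ∨ ε i = -1) ∧
      ∃ c : ℝ, c ≠ 0 ∧ ∀ i, x i = c * ε i * (if (τ i).val = 0 then 1 else 0)) ↔
    ∃ p, x p ≠ 0 ∧ ∀ k, k ≠ p → x k = 0 := by
  have hτ : ∀ (τ : Equiv.Perm (Fin l)) i, (τ i).val = 0 ↔ i = τ.symm ⟨0, hl⟩ := fun τ i => by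
    rw [Equiv.eq_symm_apply, Fin.ext_iff]
  constructor
  · rintro ⟨τ, ε, hε, c, hc, hx⟩
    refine ⟨τ.symm ⟨0, hl⟩, ?_, fun k hk => ?_⟩
    · rw [hx, if_pos ((hτ τ _).2 rfl), mul_one]
      rcases hε (τ.symm ⟨0, hl⟩) with h | h <;> simp [h, hc]
    · rw [hx, if_neg (fun h => hk ((hτ τ k).1 h)), mul_zero]
  · rintro ⟨p, hp, h0⟩
    refine ⟨Equiv.swap p ⟨0, hl⟩, fun _ => 1, fun _ => .inl rfl, x p, hp, fun i => ?_⟩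
    have hswap : (Equiv.swap p ⟨0, hl⟩ i).val = 0 ↔ i = p := by simp [hτ]
    rcases eq_or_ne i p with rfl | hip
    · simp
    · simp [hswap, hip, h0 i hip]

theorem exists_perm_sign_const_iff {ι : Type*} (x : ι → ℝ) :
    (∃ _ : Equiv.Perm ι, ∃ ε : ι → ℝ, (∀ i, ε i = 1 ∨ ε i = -1) ∧
      ∃ c : ℝ, c ≠ 0 ∧ ∀ i, x i = c * ε i * 1) ↔
    ∃ c : ℝ, c ≠ 0 ∧ ∀ k, x k = c ∨ x k = -c := by
  constructor
  · rintro ⟨-, ε, hε, c, hc, hx⟩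
    exact ⟨c, hc, fun k => by rcases hε k with h | h <;> simp [hx, h]⟩
  · rintro ⟨c, hc, hx⟩
    refine ⟨1, fun k => x k / c, fun k => ?_, c, hc, fun k => by field_simp⟩
    rcases hx k with h | h <;> simp [h, hc]

/-- Classification of austere orbits for restricted root system of type `D_l`
(`l ≥ 4`): for nonzero `H` not proportional to any root, the set
`S_H = {α/⟪α,H⟫ - H/‖H‖²}` is invariant under negation iff `H` is a signed
permutation image of a multiple of `e₁`, or `l = 4` and `H` is a signed
permutation image of a multiple of `(1,1,1,1)`. -/
theorem stmt_11 (l : ℕ) (hl : 4 ≤ l)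
    (Rp : Set (EuclideanSpace ℝ (Fin l)))
    (hRp : Rp = {x | ∃ i j : Fin l, i < j ∧
      (x = EuclideanSpace.single i (1 : ℝ) - EuclideanSpace.single j 1 ∨
       x = EuclideanSpace.single i (1 : ℝ) + EuclideanSpace.single j 1)})
    (H : EuclideanSpace ℝ (Fin l)) (hH : H ≠ 0)
    (hprop : ∀ α ∈ Rp, ∀ c : ℝ, H ≠ c • α)
    (S : Set (EuclideanSpace ℝ (Fin l)))
    (hS : S = {y | ∃ α ∈ Rp, ⟪α, H⟫ ≠ 0 ∧ y = (⟪α, H⟫)⁻¹ • α - (‖H‖ ^ 2)⁻¹ • H}) :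
    (fun y => -y) '' S = S ↔
      ((∃ τ : Equiv.Perm (Fin l), ∃ ε : Fin l → ℝ, (∀ i, ε i = 1 ∨ ε i = -1) ∧
         ∃ c : ℝ, c ≠ 0 ∧ ∀ i, H i = c * ε i * (if (τ i).val = 0 then 1 else 0)) ∨
       (l = 4 ∧ ∃ τ : Equiv.Perm (Fin l), ∃ ε : Fin l → ℝ, (∀ i, ε i = 1 ∨ ε i = -1) ∧
         ∃ c : ℝ, c ≠ 0 ∧ ∀ i, H i = c * ε i * 1)) := by
  have hRp' : Rp = posRootsD (Fin l) := hRp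
  have hS' : S = curvatureSet (rootsD (Fin l)) H := by
    rw [hS, ← curvatureSet_posRootsD, ← hRp']
    rfl
  have hprop' : ∀ α ∈ rootsD (Fin l), ∀ c : ℝ, H ≠ c • α := by
    intro α hα c hc
    obtain ⟨β, hβ, d, -, rfl⟩ := exists_mem_posRootsD_smul_eq hα
    exact hprop β (hRp' ▸ hβ) (c * d) (by rw [hc, smul_smul])
  rw [Set.image_neg_eq_neg, Set.neg_eq_self_iff_neg_subset, hS',
    exists_perm_sign_single_iff (by omega), exists_perm_sign_const_iff]
  constructor
  · intro hsym
    simpa using exists_single_or_card_eq_four_of_neg_curvatureSet_subset (by simpa using hl) hH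
      hprop' hsym
  · rintro (⟨p, hp, h0⟩ | ⟨rfl, c, hc, hc'⟩)
    · exact neg_curvatureSet_subset_of_single hp h0
    · exact neg_curvatureSet_subset_of_card_eq_four (Fintype.card_fin 4) hc hc'
end

section
/- Let R₊ = {e₁, e₂, e₁+e₂, e₁−e₂} ⊂ ℝ² (the positive roots of type B₂). Let H ∈ ℝ² be nonzero and not proportional to any element of R₊. For α ∈ R₊ with ⟪α,H⟫ ≠ 0 set v_H(α) = α/⟪α,H⟫ − H/‖H‖², and let S_H = {v_H(α) : α ∈ R₊, ⟪α,H⟫ ≠ 0}. Then S_H = −S_H if and only if there exist a permutation τ of {1,2}, signs ε ∈ {1,−1}², and c ≠ 0 with H_i = c·ε_i·w_{τ(i)} for i = 1, 2, where w = (1 + 1/√2, 1/√2) (that is, w = e₁ + (e₁+e₂)/√2). -/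
/-!
Writing `J` for the quarter-turn rotation of `ℝ²`, every `v_H(α)` is a multiple of `J H`:
`α / ⟪α, H⟫ - H / ‖H‖² = (tan θ_α / ‖H‖²) • J H`, where `θ_α` is the angle from `H` to `α`.
So `S_H = -S_H` only concerns the four tangents. Orthogonal roots have tangents `t` and `-1/t`,
hence the tangents are `{p, -1/p, q, -1/q}` with `p = -H₂/H₁` and `q = (H₁ - H₂)/(H₁ + H₂)`,
and this set is symmetric iff `q = -p` or `q = 1/p`, i.e. iff
`H₁⁴ - 6 H₁² H₂² + H₂⁴ = Re (H₁ + i H₂)⁴` vanishes. This quartic is invariant under signed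
permutations and vanishes at `w`; its zero set is the union of the four lines through the
signed permutations of `w`.
-/

open scoped RealInnerProductSpace Pointwise

namespace B2

lemma neg_image_eq_self_iff {A B : Type*} [InvolutiveNeg A] [InvolutiveNeg B] {f : A → B}
    (hf : Function.Injective f) (hneg : ∀ t, f (-t) = -f t) (T : Set A) :
    -(f '' T) = f '' T ↔ -T = T := by
  have : -(f '' T) = f '' (-T) := by
    simp only [← Set.image_neg_eq_neg, Set.image_image, hneg]
  rw [this, (Set.image_injective.2 hf).eq_iff]

def negInvPairs {K : Type*} [Field K] (p q : K) : Set K := {p, -p⁻¹, q, -q⁻¹}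

lemma neg_negInvPairs_eq_self_iff {K : Type*} [Field K] [CharZero K] {p q : K} (hp : p ≠ 0)
    (hp1 : p ^ 2 ≠ 1) : -negInvPairs p q = negInvPairs p q ↔ q = -p ∨ q = p⁻¹ := by
  constructor
  · intro h
    have hmem : -p ∈ negInvPairs p q := h ▸ Set.neg_mem_neg.2 (by simp [negInvPairs])
    simp only [negInvPairs, Set.mem_insert_iff, Set.mem_singleton_iff, neg_inj] at hmem
    rcases hmem with h | h | h | h
    · exact absurd (self_eq_neg.1 h.symm) hp
    · exact absurd (by field_simp at h; exact h) hp1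
    · exact .inl h.symm
    · exact .inr (by rw [h, inv_inv])
  · rintro (rfl | rfl)
    all_goals
      ext
      simp only [negInvPairs, inv_neg, inv_inv, neg_neg, Set.neg_insert, Set.neg_singleton,
        Set.mem_insert_iff, Set.mem_singleton_iff]
      tauto

section Plane

variable (H α : EuclideanSpace ℝ (Fin 2))

lemma inner_eq_coords : ⟪α, H⟫ = α 0 * H 0 + α 1 * H 1 := by
  simp [PiLp.inner_apply, Fin.sum_univ_two, mul_comm]

lemma norm_sq_eq_coords : ‖H‖ ^ 2 = H 0 ^ 2 + H 1 ^ 2 := by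
  simp [EuclideanSpace.norm_sq_eq, Fin.sum_univ_two]

def perp : EuclideanSpace ℝ (Fin 2) := !₂[-H 1, H 0]

lemma perp_zero : perp H 0 = -H 1 := rfl

lemma perp_one : perp H 1 = H 0 := rfl

lemma inner_perp : ⟪α, perp H⟫ = α 1 * H 0 - α 0 * H 1 := by
  rw [inner_eq_coords, perp_zero, perp_one]; ring

/-- The tangent of the oriented angle from `H` to `α`. -/
noncomputable def tanAngle : ℝ := ⟪α, perp H⟫ / ⟪α, H⟫

lemma tanAngle_eq : tanAngle H α = (α 1 * H 0 - α 0 * H 1) / (α 0 * H 0 + α 1 * H 1) := by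
  rw [tanAngle, inner_perp, inner_eq_coords]

variable {H α}

lemma perp_ne_zero (hH : H ≠ 0) : perp H ≠ 0 := by
  contrapose! hH
  have h0 := congrArg (· 1) hH
  have h1 := congrArg (· 0) hH
  simp only [perp] at h0 h1
  ext i; fin_cases i <;> simp_all

lemma inner_perp_ne_zero_of_forall_ne_smul (hα : α ≠ 0) (h : ∀ c : ℝ, H ≠ c • α) :
    ⟪α, perp H⟫ ≠ 0 := by
  rw [inner_perp, sub_ne_zero]
  intro hcross
  by_cases h0 : α 0 = 0
  · have h1 : α 1 ≠ 0 := fun h1 => hα (by ext i; fin_cases i <;> simp [h0, h1])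
    refine h (H 1 / α 1) ?_
    ext i; fin_cases i <;> simp only [Fin.zero_eta, Fin.mk_one, PiLp.smul_apply, smul_eq_mul]
    · rw [div_mul_eq_mul_div, eq_div_iff h1]; linear_combination hcross
    · field_simp
  · refine h (H 0 / α 0) ?_
    ext i; fin_cases i <;> simp only [Fin.zero_eta, Fin.mk_one, PiLp.smul_apply, smul_eq_mul]
    · field_simp
    · field_simp; linear_combination -hcross

lemma inv_inner_smul_sub_eq_smul_perp (hα : ⟪α, H⟫ ≠ 0) :
    (⟪α, H⟫)⁻¹ • α - (‖H‖ ^ 2)⁻¹ • H = (tanAngle H α / ‖H‖ ^ 2) • perp H := by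
  have hH : H 0 ^ 2 + H 1 ^ 2 ≠ 0 := by
    have : H ≠ 0 := by rintro rfl; simp at hα
    rw [← norm_sq_eq_coords]; positivity
  rw [inner_eq_coords] at hα ⊢
  rw [norm_sq_eq_coords, tanAngle_eq]
  ext i; fin_cases i <;>
    simp only [Fin.zero_eta, Fin.mk_one, PiLp.sub_apply, PiLp.smul_apply, smul_eq_mul, perp_zero,
      perp_one] <;> field_simp <;> ring

lemma setOf_eq_image_tanAngle {R : Set (EuclideanSpace ℝ (Fin 2))}
    (hR : ∀ α ∈ R, ⟪α, H⟫ ≠ 0) :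
    {y | ∃ α ∈ R, ⟪α, H⟫ ≠ 0 ∧ y = (⟪α, H⟫)⁻¹ • α - (‖H‖ ^ 2)⁻¹ • H} =
      (fun t => (t / ‖H‖ ^ 2) • perp H) '' (tanAngle H '' R) := by
  rw [Set.image_image]
  ext y
  constructor
  · rintro ⟨α, hα, hαH, rfl⟩
    exact ⟨α, hα, (inv_inner_smul_sub_eq_smul_perp hαH).symm⟩
  · rintro ⟨α, hα, rfl⟩
    exact ⟨α, hα, hR α hα, (inv_inner_smul_sub_eq_smul_perp (hR α hα)).symm⟩

lemma smul_perp_injective (hH : H ≠ 0) :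
    Function.Injective fun t : ℝ => (t / ‖H‖ ^ 2) • perp H := by
  intro s t hst
  have hN : ‖H‖ ^ 2 ≠ 0 := by positivity
  simpa [div_left_inj' hN] using smul_left_injective ℝ (perp_ne_zero hH) hst

end Plane

noncomputable def e₀ : EuclideanSpace ℝ (Fin 2) := EuclideanSpace.single 0 1

noncomputable def e₁ : EuclideanSpace ℝ (Fin 2) := EuclideanSpace.single 1 1

def posRoots : Set (EuclideanSpace ℝ (Fin 2)) := {e₀, e₁, e₀ + e₁, e₀ - e₁}

section Roots

variable {H : EuclideanSpace ℝ (Fin 2)}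

lemma inner_e₀ : ⟪e₀, H⟫ = H 0 := by simp [e₀, EuclideanSpace.inner_single_left]

lemma inner_e₁ : ⟪e₁, H⟫ = H 1 := by simp [e₁, EuclideanSpace.inner_single_left]

lemma ne_zero_of_mem_posRoots {α : EuclideanSpace ℝ (Fin 2)} (hα : α ∈ posRoots) : α ≠ 0 := by
  revert α
  simp [posRoots, e₀, e₁, ← WithLp.ofLp_eq_zero, funext_iff]

lemma coords_ne_zero_of_forall_ne_smul (h : ∀ α ∈ posRoots, ∀ c : ℝ, H ≠ c • α) :
    H 0 ≠ 0 ∧ H 1 ≠ 0 ∧ H 0 + H 1 ≠ 0 ∧ H 0 - H 1 ≠ 0 := by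
  have hperp α (hα : α ∈ posRoots) : ⟪α, perp H⟫ ≠ 0 :=
    inner_perp_ne_zero_of_forall_ne_smul (ne_zero_of_mem_posRoots hα) (h α hα)
  have h₀ := hperp e₁ (by simp [posRoots])
  have h₁ := hperp e₀ (by simp [posRoots])
  have h₂ := hperp (e₀ - e₁) (by simp [posRoots])
  have h₃ := hperp (e₀ + e₁) (by simp [posRoots])
  simp only [inner_add_left, inner_sub_left, inner_e₀, inner_e₁, perp_zero, perp_one] at h₀ h₁ h₂ h₃
  exact ⟨h₀, neg_ne_zero.1 h₁, fun h => h₂ (by linear_combination -h),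
    fun h => h₃ (by linear_combination h)⟩

lemma inner_posRoots_ne_zero (h0 : H 0 ≠ 0) (h1 : H 1 ≠ 0) (hadd : H 0 + H 1 ≠ 0)
    (hsub : H 0 - H 1 ≠ 0) : ∀ α ∈ posRoots, ⟪α, H⟫ ≠ 0 := by
  rintro α (rfl | rfl | rfl | rfl) <;>
    simp only [inner_add_left, inner_sub_left, inner_e₀, inner_e₁] <;> assumption

lemma tanAngle_image_posRoots :
    tanAngle H '' posRoots = negInvPairs (-H 1 / H 0) ((H 0 - H 1) / (H 0 + H 1)) := by
  simp only [posRoots, negInvPairs, Set.image_insert_eq, Set.image_singleton, tanAngle,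
    inner_add_left, inner_sub_left, inner_e₀, inner_e₁, perp_zero, perp_one, inv_div]
  refine congrArg₂ insert rfl (congrArg₂ insert ?_ (congrArg₂ insert ?_ (congrArg _ ?_))) <;> ring

end Roots

def quartic (x y : ℝ) : ℝ := x ^ 4 - 6 * x ^ 2 * y ^ 2 + y ^ 4

lemma quartic_eq_mul (x y : ℝ) :
    quartic x y = (x ^ 2 - 2 * x * y - y ^ 2) * (x ^ 2 + 2 * x * y - y ^ 2) := by
  unfold quartic; ring

lemma neg_negInvPairs_eq_self_iff_quartic {a b : ℝ} (ha : a ≠ 0) (hb : b ≠ 0)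
    (hadd : a + b ≠ 0) (hsub : a - b ≠ 0) :
    -negInvPairs (-b / a) ((a - b) / (a + b)) = negInvPairs (-b / a) ((a - b) / (a + b)) ↔
      quartic a b = 0 := by
  have hp1 : (-b / a) ^ 2 ≠ 1 := by
    rw [div_pow, neg_sq, Ne, div_eq_one_iff_eq (pow_ne_zero 2 ha), sq_eq_sq_iff_eq_or_eq_neg]
    rintro (h | h)
    · exact hsub (by linear_combination -h)
    · exact hadd (by linear_combination h)
  have h₁ : (a - b) / (a + b) = -(-b / a) ↔ a ^ 2 - 2 * a * b - b ^ 2 = 0 := by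
    rw [neg_div, neg_neg, div_eq_div_iff hadd ha]
    constructor <;> intro h <;> linear_combination h
  have h₂ : (a - b) / (a + b) = (-b / a)⁻¹ ↔ a ^ 2 + 2 * a * b - b ^ 2 = 0 := by
    rw [inv_div, div_eq_div_iff hadd (neg_ne_zero.2 hb)]
    constructor <;> intro h <;> linear_combination -h
  rw [neg_negInvPairs_eq_self_iff (div_ne_zero (neg_ne_zero.2 hb) ha) hp1, h₁, h₂,
    quartic_eq_mul, mul_eq_zero]

noncomputable def austereDir (j : Fin 2) : ℝ := if j.val = 0 then 1 + (√2)⁻¹ else (√2)⁻¹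

lemma austereDir_one : austereDir 1 = (√2)⁻¹ := rfl

lemma austereDir_zero : austereDir 0 = (1 + √2) * austereDir 1 := by
  have hs : √2 ≠ 0 := by positivity
  rw [austereDir_one, add_mul, one_mul, mul_inv_cancel₀ hs, add_comm]
  rfl

lemma austereDir_pos (j : Fin 2) : 0 < austereDir j := by
  unfold austereDir; split_ifs <;> positivity

lemma quartic_austereDir : quartic (austereDir 0) (austereDir 1) = 0 := by
  have h2 : √2 ^ 2 = 2 := Real.sq_sqrt zero_le_two
  rw [austereDir_zero, quartic]
  linear_combination (austereDir 1 ^ 4 * (√2 ^ 2 + 4 * √2 + 2)) * h2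

lemma quartic_signedPerm_austereDir {τ : Equiv.Perm (Fin 2)} {ε : Fin 2 → ℝ}
    (hε : ∀ i, ε i = 1 ∨ ε i = -1) (c : ℝ) :
    quartic (c * ε 0 * austereDir (τ 0)) (c * ε 1 * austereDir (τ 1)) = 0 := by
  have hsq i : (c * ε i * austereDir (τ i)) ^ 2 = c ^ 2 * austereDir (τ i) ^ 2 := by
    rcases hε i with h | h <;> simp [h, mul_pow]
  have h4 x y : quartic x y = (x ^ 2) ^ 2 - 6 * x ^ 2 * y ^ 2 + (y ^ 2) ^ 2 := by
    unfold quartic; ring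
  have hw := quartic_austereDir
  rw [h4] at hw ⊢
  rw [hsq, hsq]
  have hτ : ∀ σ : Equiv.Perm (Fin 2), (σ 0 = 0 ∧ σ 1 = 1) ∨ (σ 0 = 1 ∧ σ 1 = 0) := by decide
  rcases hτ τ with ⟨h0, h1⟩ | ⟨h0, h1⟩ <;> rw [h0, h1] <;> linear_combination c ^ 4 * hw

lemma exists_signedPerm_of_mul_eq {x : Fin 2 → ℝ} (hx : x 1 ≠ 0) (τ : Equiv.Perm (Fin 2))
    {ε : Fin 2 → ℝ} (hε : ∀ i, ε i = 1 ∨ ε i = -1)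
    (h : x 0 * (ε 1 * austereDir (τ 1)) = x 1 * (ε 0 * austereDir (τ 0))) :
    ∃ τ : Equiv.Perm (Fin 2), ∃ ε : Fin 2 → ℝ, (∀ i, ε i = 1 ∨ ε i = -1) ∧
      ∃ c : ℝ, c ≠ 0 ∧ ∀ i, x i = c * ε i * austereDir (τ i) := by
  have hε1 : ε 1 ≠ 0 := by rcases hε 1 with h | h <;> simp [h]
  have hw1 := (austereDir_pos (τ 1)).ne'
  refine ⟨τ, ε, hε, x 1 / (ε 1 * austereDir (τ 1)), div_ne_zero hx (mul_ne_zero hε1 hw1),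
    Fin.forall_fin_two.2 ⟨?_, ?_⟩⟩
  · field_simp; linear_combination h
  · field_simp

lemma exists_signedPerm_of_quartic_eq_zero {x : Fin 2 → ℝ} (hx : x ≠ 0)
    (hq : quartic (x 0) (x 1) = 0) :
    ∃ τ : Equiv.Perm (Fin 2), ∃ ε : Fin 2 → ℝ, (∀ i, ε i = 1 ∨ ε i = -1) ∧
      ∃ c : ℝ, c ≠ 0 ∧ ∀ i, x i = c * ε i * austereDir (τ i) := by
  have hx1 : x 1 ≠ 0 := by
    intro h1
    have h0 : x 0 = 0 := by simpa [quartic, h1] using hq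
    exact hx (funext <| Fin.forall_fin_two.2 ⟨h0, h1⟩)
  have h2 : √2 ^ 2 = 2 := Real.sq_sqrt zero_le_two
  have hfac : (x 0 - (1 + √2) * x 1) * (x 0 - (1 - √2) * x 1) *
      ((x 0 - (√2 - 1) * x 1) * (x 0 + (1 + √2) * x 1)) = 0 := by
    rw [← hq, quartic]
    linear_combination (√2 ^ 2 * x 1 ^ 4 - 2 * x 0 ^ 2 * x 1 ^ 2) * h2
  have hε₁ : ∀ i, (1 : Fin 2 → ℝ) i = 1 ∨ (1 : Fin 2 → ℝ) i = -1 := fun _ => .inl rfl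
  have hε₂ : ∀ i, (![-1, 1] : Fin 2 → ℝ) i = 1 ∨ (![-1, 1] : Fin 2 → ℝ) i = -1 :=
    Fin.forall_fin_two.2 ⟨.inr rfl, .inl rfl⟩
  simp only [mul_eq_zero, sub_eq_zero, add_eq_zero_iff_eq_neg] at hfac
  rcases hfac with (h | h) | (h | h)
  · refine exists_signedPerm_of_mul_eq hx1 1 hε₁ ?_
    simp only [Equiv.Perm.one_apply, Pi.one_apply, one_mul, austereDir_zero]
    linear_combination austereDir 1 * h
  · refine exists_signedPerm_of_mul_eq hx1 (Equiv.swap 0 1) hε₂ ?_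
    simp only [Equiv.swap_apply_left, Equiv.swap_apply_right, Matrix.cons_val_zero,
      Matrix.cons_val_one, Matrix.cons_val_fin_one, one_mul, austereDir_zero]
    linear_combination austereDir 1 * ((1 + √2) * h - x 1 * h2)
  · refine exists_signedPerm_of_mul_eq hx1 (Equiv.swap 0 1) hε₁ ?_
    simp only [Equiv.swap_apply_left, Equiv.swap_apply_right, Pi.one_apply, one_mul,
      austereDir_zero]
    linear_combination austereDir 1 * ((1 + √2) * h + x 1 * h2)
  · refine exists_signedPerm_of_mul_eq hx1 1 hε₂ ?_
    simp only [Equiv.Perm.one_apply, Matrix.cons_val_zero, Matrix.cons_val_one,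
      Matrix.cons_val_fin_one, one_mul, austereDir_zero]
    linear_combination austereDir 1 * h

lemma quartic_eq_zero_iff_exists_signedPerm {x : Fin 2 → ℝ} (hx : x ≠ 0) :
    quartic (x 0) (x 1) = 0 ↔
      ∃ τ : Equiv.Perm (Fin 2), ∃ ε : Fin 2 → ℝ, (∀ i, ε i = 1 ∨ ε i = -1) ∧
        ∃ c : ℝ, c ≠ 0 ∧ ∀ i, x i = c * ε i * austereDir (τ i) := by
  refine ⟨exists_signedPerm_of_quartic_eq_zero hx, ?_⟩
  rintro ⟨τ, ε, hε, c, -, hx⟩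
  rw [hx, hx]
  exact quartic_signedPerm_austereDir hε c

end B2

open B2 in
/-- Classification of austere orbits for restricted root system of type `B₂`:
for nonzero `H` not proportional to any root, the set
`S_H = {α/⟪α,H⟫ - H/‖H‖²}` is invariant under negation iff `H` is a signed
permutation image of a multiple of `w = e₁ + (e₁+e₂)/√2 = (1+1/√2, 1/√2)`. -/
theorem stmt_12
    (Rp : Set (EuclideanSpace ℝ (Fin 2)))
    (hRp : Rp = {EuclideanSpace.single 0 (1 : ℝ), EuclideanSpace.single 1 (1 : ℝ),
      EuclideanSpace.single 0 (1 : ℝ) + EuclideanSpace.single 1 1,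
      EuclideanSpace.single 0 (1 : ℝ) - EuclideanSpace.single 1 1})
    (H : EuclideanSpace ℝ (Fin 2)) (hH : H ≠ 0)
    (hprop : ∀ α ∈ Rp, ∀ c : ℝ, H ≠ c • α)
    (S : Set (EuclideanSpace ℝ (Fin 2)))
    (hS : S = {y | ∃ α ∈ Rp, ⟪α, H⟫ ≠ 0 ∧ y = (⟪α, H⟫)⁻¹ • α - (‖H‖ ^ 2)⁻¹ • H}) :
    (fun y => -y) '' S = S ↔
      ∃ τ : Equiv.Perm (Fin 2), ∃ ε : Fin 2 → ℝ, (∀ i, ε i = 1 ∨ ε i = -1) ∧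
        ∃ c : ℝ, c ≠ 0 ∧ ∀ i, H i = c * ε i *
          (if (τ i).val = 0 then 1 + (Real.sqrt 2)⁻¹ else (Real.sqrt 2)⁻¹) := by
  replace hRp : Rp = posRoots := hRp
  subst hRp hS
  obtain ⟨h0, h1, hadd, hsub⟩ := coords_ne_zero_of_forall_ne_smul hprop
  rw [Set.image_neg_eq_neg, setOf_eq_image_tanAngle (inner_posRoots_ne_zero h0 h1 hadd hsub),
    neg_image_eq_self_iff (smul_perp_injective hH) (fun t => by simp [neg_div]),
    tanAngle_image_posRoots, neg_negInvPairs_eq_self_iff_quartic h0 h1 hadd hsub,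
    quartic_eq_zero_iff_exists_signedPerm ((WithLp.ofLp_eq_zero 2).not.2 hH)]
  rfl
end

section
/- Let l ≥ 3 and let R₊ = {e_i : 1 ≤ i ≤ l} ∪ {e_i − e_j : 1 ≤ i < j ≤ l} ∪ {e_i + e_j : 1 ≤ i < j ≤ l} ⊂ ℝ^l (the positive roots of type B_l). Then for every nonzero H ∈ ℝ^l that is not proportional to any element of R₊, the set S_H = {v_H(α) : α ∈ R₊, ⟪α,H⟫ ≠ 0}, where v_H(α) = α/⟪α,H⟫ − H/‖H‖², is NOT invariant under negation: S_H ≠ −S_H. -/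
/-!
Write `t = 2 / ‖H‖²`. The identity `v_H(α) = -v_H(β)` says that `t • H - α / ⟪α, H⟫` is a multiple
of the root `β`, so it has at most two nonzero coordinates. If `H` had three nonzero coordinates
`i, j, k`, then `α = e_i` would force `H` to be supported on `{i, j, k}` with `t H_i² = 1`, and
likewise for `j` and `k`, so `t ‖H‖² = 3` instead of `2`. If `H` had exactly two nonzero
coordinates `i, j`, then for a third index `k`, `α = e_i + e_k` would give `t H_i² = 1`, likewise
`t H_j² = 1`, so `H_j = ± H_i` and `H` would be proportional to the root `e_i ± e_j`. With a single
nonzero coordinate, `H` is proportional to a root `e_i`.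
-/

open scoped RealInnerProductSpace

open EuclideanSpace

def positiveRootsB (ι : Type*) [Fintype ι] [LinearOrder ι] : Set (EuclideanSpace ℝ ι) :=
  {x | (∃ i : ι, x = single i (1 : ℝ)) ∨
      ∃ i j : ι, i < j ∧ (x = single i (1 : ℝ) - single j 1 ∨ x = single i (1 : ℝ) + single j 1)}

section positiveRootsB

variable {ι : Type*} [Fintype ι] [LinearOrder ι]

lemma single_mem_positiveRootsB (i : ι) : single i (1 : ℝ) ∈ positiveRootsB ι :=
  Or.inl ⟨i, rfl⟩

lemma single_add_single_mem_positiveRootsB {i j : ι} (hij : i ≠ j) :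
    single i (1 : ℝ) + single j 1 ∈ positiveRootsB ι := by
  rcases hij.lt_or_gt with h | h
  · exact Or.inr ⟨i, j, h, Or.inr rfl⟩
  · exact Or.inr ⟨j, i, h, Or.inr (add_comm _ _)⟩

lemma eq_zero_or_eq_zero_or_eq_zero_of_mem_positiveRootsB {β : EuclideanSpace ℝ ι}
    (hβ : β ∈ positiveRootsB ι) {p q r : ι} (hpq : p ≠ q) (hpr : p ≠ r) (hqr : q ≠ r) :
    β p = 0 ∨ β q = 0 ∨ β r = 0 := by
  rcases hβ with ⟨i, rfl⟩ | ⟨i, j, -, rfl | rfl⟩ <;>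
    simp only [PiLp.add_apply, PiLp.sub_apply, PiLp.single_apply] <;> grind

lemma exists_mem_positiveRootsB_eq_smul {x : EuclideanSpace ℝ ι} {i j : ι} (hij : i ≠ j)
    (hx : ∀ r, r ≠ i → r ≠ j → x r = 0) (hsq : x j ^ 2 = x i ^ 2) :
    ∃ α ∈ positiveRootsB ι, ∃ c : ℝ, x = c • α := by
  have hdecomp : x = x i • single i (1 : ℝ) + x j • single j 1 := by
    ext r
    by_cases hri : r = i
    · subst hri; simp [hij]
    by_cases hrj : r = j
    · subst hrj; simp [hri]
    simp [hri, hrj, hx r hri hrj]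
  rcases sq_eq_sq_iff_eq_or_eq_neg.mp hsq with hji | hji <;> rw [hji] at hdecomp
  · exact ⟨_, single_add_single_mem_positiveRootsB hij, x i, hdecomp.trans (by module)⟩
  rcases hij.lt_or_gt with hlt | hlt
  · exact ⟨_, Or.inr ⟨i, j, hlt, Or.inl rfl⟩, x i, hdecomp.trans (by module)⟩
  · exact ⟨_, Or.inr ⟨j, i, hlt, Or.inl rfl⟩, -x i, hdecomp.trans (by module)⟩

end positiveRootsB

lemma EuclideanSpace.norm_sq_eq_of_eq_zero {ι : Type*} [Fintype ι] [DecidableEq ι]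
    {x : EuclideanSpace ℝ ι} {i j k : ι} (hij : i ≠ j) (hik : i ≠ k) (hjk : j ≠ k)
    (hx : ∀ r, r ≠ i → r ≠ j → r ≠ k → x r = 0) : ‖x‖ ^ 2 = x i ^ 2 + x j ^ 2 + x k ^ 2 := by
  rw [EuclideanSpace.norm_sq_eq, ← Finset.sum_subset (Finset.subset_univ {i, j, k})]
  · simp [Finset.sum_insert, hij, hik, hjk, add_assoc]
  · intro r _ hr
    simp only [Finset.mem_insert, Finset.mem_singleton, not_or] at hr
    simp [hx r hr.1 hr.2.1 hr.2.2]

section NegPaired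

variable {E : Type*} [NormedAddCommGroup E] [InnerProductSpace ℝ E]

/-- `S_H ⊆ -S_H`, with `v_H(α) = -v_H(β)` solved for `β / ⟪β, H⟫`. -/
def NegPaired (R : Set E) (H : E) : Prop :=
  ∀ α ∈ R, ⟪α, H⟫ ≠ 0 → ∃ β ∈ R, (2 / ‖H‖ ^ 2) • H - ⟪α, H⟫⁻¹ • α = ⟪β, H⟫⁻¹ • β

lemma negPaired_of_subset_neg_image {R : Set E} {H : E}
    (hneg : {y | ∃ α ∈ R, ⟪α, H⟫ ≠ 0 ∧ y = ⟪α, H⟫⁻¹ • α - (‖H‖ ^ 2)⁻¹ • H} ⊆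
      (fun y => -y) '' {y | ∃ α ∈ R, ⟪α, H⟫ ≠ 0 ∧ y = ⟪α, H⟫⁻¹ • α - (‖H‖ ^ 2)⁻¹ • H}) :
    NegPaired R H := by
  intro α hα ha
  obtain ⟨_, ⟨β, hβ, -, rfl⟩, hneg_eq⟩ := hneg ⟨α, hα, ha, rfl⟩
  exact ⟨β, hβ, by linear_combination (norm := module) hneg_eq⟩

end NegPaired

namespace NegPaired

variable {ι : Type*} [Fintype ι] [LinearOrder ι] {H : EuclideanSpace ℝ ι}
lemma coord_eq_zero (h : NegPaired (positiveRootsB ι) H) {α : EuclideanSpace ℝ ι}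
    (hα : α ∈ positiveRootsB ι) (ha : ⟪α, H⟫ ≠ 0) {p q r : ι} (hpq : p ≠ q) (hpr : p ≠ r)
    (hqr : q ≠ r) (hp : 2 / ‖H‖ ^ 2 * H p - ⟪α, H⟫⁻¹ * α p ≠ 0)
    (hq : 2 / ‖H‖ ^ 2 * H q - ⟪α, H⟫⁻¹ * α q ≠ 0) :
    2 / ‖H‖ ^ 2 * H r - ⟪α, H⟫⁻¹ * α r = 0 := by
  obtain ⟨β, hβ, hw⟩ := h α hα ha
  have hcoord (x : ι) : 2 / ‖H‖ ^ 2 * H x - ⟪α, H⟫⁻¹ * α x = ⟪β, H⟫⁻¹ * β x := by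
    simpa using congrArg (· x) hw
  rw [hcoord] at hp hq ⊢
  rcases eq_zero_or_eq_zero_or_eq_zero_of_mem_positiveRootsB hβ hpq hpr hqr with h0 | h0 | h0
  · simp [h0] at hp
  · simp [h0] at hq
  · simp [h0]

lemma div_mul_sq_eq_one (h : NegPaired (positiveRootsB ι) H) {α : EuclideanSpace ℝ ι}
    (hα : α ∈ positiveRootsB ι) {i p q : ι} (hi : H i ≠ 0) (hαH : ⟪α, H⟫ = H i)
    (hαi : α i = 1) (hpq : p ≠ q) (hpi : p ≠ i) (hqi : q ≠ i)
    (hp : 2 / ‖H‖ ^ 2 * H p - (H i)⁻¹ * α p ≠ 0) (hq : 2 / ‖H‖ ^ 2 * H q - (H i)⁻¹ * α q ≠ 0) :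
    2 / ‖H‖ ^ 2 * H i ^ 2 = 1 := by
  have hwi := h.coord_eq_zero hα (hαH ▸ hi) hpq hpi hqi (hαH ▸ hp) (hαH ▸ hq)
  rw [hαH, hαi] at hwi
  field_simp at hwi
  linear_combination hwi

lemma false_of_three_ne_zero (h : NegPaired (positiveRootsB ι) H) {i j k : ι}
    (hij : i ≠ j) (hik : i ≠ k) (hjk : j ≠ k) (hi : H i ≠ 0) (hj : H j ≠ 0) (hk : H k ≠ 0) :
    False := by
  have hnorm : ‖H‖ ≠ 0 := fun h0 => hi (by simp [norm_eq_zero.mp h0])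
  have hsingle (a b c : ι) (hab : a ≠ b) (hac : a ≠ c) (hbc : b ≠ c) (ha : H a ≠ 0)
      (hb : H b ≠ 0) (hc : H c ≠ 0) :
      2 / ‖H‖ ^ 2 * H a ^ 2 = 1 ∧ ∀ r, r ≠ a → r ≠ b → r ≠ c → H r = 0 := by
    have hαH : ⟪single a (1 : ℝ), H⟫ = H a := by simp [EuclideanSpace.inner_single_left]
    have hw (x : ι) (hx : x ≠ a) (hx' : H x ≠ 0) :
        2 / ‖H‖ ^ 2 * H x - (H a)⁻¹ * single a (1 : ℝ) x ≠ 0 := by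
      simp [hx, hnorm, hx']
    refine ⟨h.div_mul_sq_eq_one (single_mem_positiveRootsB a) ha hαH (by simp) hbc hab.symm
      hac.symm (hw b hab.symm hb) (hw c hac.symm hc), fun r hra hrb hrc => ?_⟩
    have := h.coord_eq_zero (single_mem_positiveRootsB a) (hαH ▸ ha) hbc hrb.symm hrc.symm
      (hαH ▸ hw b hab.symm hb) (hαH ▸ hw c hac.symm hc)
    simpa [PiLp.single_apply, hra, hnorm] using this
  have hnormsq : ‖H‖ ^ 2 = H i ^ 2 + H j ^ 2 + H k ^ 2 :=
    norm_sq_eq_of_eq_zero hij hik hjk (hsingle i j k hij hik hjk hi hj hk).2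
  have e_i := (hsingle i j k hij hik hjk hi hj hk).1
  have e_j := (hsingle j i k hij.symm hjk hik hj hi hk).1
  have e_k := (hsingle k i j hik.symm hjk.symm hij hk hi hj).1
  rw [hnormsq] at e_i e_j e_k
  have hpos : H i ^ 2 + H j ^ 2 + H k ^ 2 ≠ 0 := hnormsq ▸ pow_ne_zero 2 hnorm
  field_simp at e_i e_j e_k
  exact hpos (by linarith)

lemma false_of_two_ne_zero (h : NegPaired (positiveRootsB ι) H)
    (hprop : ∀ α ∈ positiveRootsB ι, ∀ c : ℝ, H ≠ c • α) {i j k : ι} (hij : i ≠ j)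
    (hki : k ≠ i) (hkj : k ≠ j) (hi : H i ≠ 0) (hj : H j ≠ 0)
    (hsupp : ∀ r, r ≠ i → r ≠ j → H r = 0) : False := by
  have hnorm : ‖H‖ ≠ 0 := fun h0 => hi (by simp [norm_eq_zero.mp h0])
  have hk : H k = 0 := hsupp k hki hkj
  have hsq (a b : ι) (hab : a ≠ b) (hka : k ≠ a) (hkb : k ≠ b) (ha : H a ≠ 0) (hb : H b ≠ 0) :
      2 / ‖H‖ ^ 2 * H a ^ 2 = 1 :=
    h.div_mul_sq_eq_one (single_add_single_mem_positiveRootsB hka.symm) ha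
      (by simp [inner_add_left, EuclideanSpace.inner_single_left, hk])
      (by simp [hka.symm]) hkb.symm hab.symm hka
      (by simp [hab.symm, hkb.symm, hnorm, hb])
      (by simp [hka, hk, ha])
  have hsq_eq : H j ^ 2 = H i ^ 2 := by
    have e_i := hsq i j hij hki hkj hi hj
    have e_j := hsq j i hij.symm hkj hki hj hi
    field_simp at e_i e_j
    linarith
  obtain ⟨α, hα, c, hH⟩ := exists_mem_positiveRootsB_eq_smul hij hsupp hsq_eq
  exact hprop α hα c hH

end NegPaired

theorem not_negPaired_positiveRootsB {ι : Type*} [Fintype ι] [LinearOrder ι]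
    {H : EuclideanSpace ℝ ι} (hcard : 3 ≤ Fintype.card ι) (hH : H ≠ 0)
    (hprop : ∀ α ∈ positiveRootsB ι, ∀ c : ℝ, H ≠ c • α) :
    ¬ NegPaired (positiveRootsB ι) H := by
  intro h
  obtain ⟨i, hi⟩ : ∃ i, H i ≠ 0 := by
    by_contra! h0
    exact hH (by ext r; simp [h0])
  by_cases hone : ∀ r, r ≠ i → H r = 0
  · refine hprop _ (single_mem_positiveRootsB i) (H i) ?_
    ext r
    by_cases hri : r = i
    · subst hri; simp
    · simp [hri, hone r hri]
  push Not at hone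
  obtain ⟨j, hji, hj⟩ := hone
  by_cases htwo : ∀ r, r ≠ i → r ≠ j → H r = 0
  · obtain ⟨k, -, hk⟩ := Finset.exists_mem_notMem_of_card_lt_card
      (s := {i, j}) (t := Finset.univ) (Finset.card_le_two.trans_lt (by rwa [Finset.card_univ]))
    simp only [Finset.mem_insert, Finset.mem_singleton, not_or] at hk
    exact h.false_of_two_ne_zero hprop hji.symm hk.1 hk.2 hi hj htwo
  push Not at htwo
  obtain ⟨k, hki, hkj, hk⟩ := htwo
  exact h.false_of_three_ne_zero hji.symm hki.symm hkj.symm hi hj hk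

/-- For the restricted root system of type `B_l` (`l ≥ 3`), no orbit other than
those through restricted root vectors is austere: for every nonzero `H` not
proportional to any positive root, the set `S_H = {α/⟪α,H⟫ - H/‖H‖²}` is not
invariant under negation. -/
theorem stmt_14 (l : ℕ) (hl : 3 ≤ l)
    (Rp : Set (EuclideanSpace ℝ (Fin l)))
    (hRp : Rp = {x | (∃ i : Fin l, x = EuclideanSpace.single i (1 : ℝ)) ∨
      ∃ i j : Fin l, i < j ∧
        (x = EuclideanSpace.single i (1 : ℝ) - EuclideanSpace.single j 1 ∨
         x = EuclideanSpace.single i (1 : ℝ) + EuclideanSpace.single j 1)})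
    (H : EuclideanSpace ℝ (Fin l)) (hH : H ≠ 0)
    (hprop : ∀ α ∈ Rp, ∀ c : ℝ, H ≠ c • α)
    (S : Set (EuclideanSpace ℝ (Fin l)))
    (hS : S = {y | ∃ α ∈ Rp, ⟪α, H⟫ ≠ 0 ∧ y = (⟪α, H⟫)⁻¹ • α - (‖H‖ ^ 2)⁻¹ • H}) :
    (fun y => -y) '' S ≠ S := by
  subst hRp hS
  intro hneg
  exact not_negPaired_positiveRootsB (by simpa using hl) hH hprop
    (negPaired_of_subset_neg_image hneg.symm.subset)
end

section
/- Let R₊ ⊂ ℝ⁴ be the set of positive roots of type F₄: R₊ = {e_i : 1 ≤ i ≤ 4} ∪ {e_i − e_j : 1 ≤ i < j ≤ 4} ∪ {e_i + e_j : 1 ≤ i < j ≤ 4} ∪ {(e₁ ± e₂ ± e₃ ± e₄)/2 (all eight sign choices)}. Then for every nonzero H ∈ ℝ⁴ that is not proportional to any element of R₊, the set S_H = {v_H(α) : α ∈ R₊, ⟪α,H⟫ ≠ 0}, where v_H(α) = α/⟪α,H⟫ − H/‖H‖², is NOT invariant under negation: S_H ≠ −S_H. -/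
open scoped RealInnerProductSpace

/-!
If `S_H = -S_H`, every root `α` with `⟪α, H⟫ ≠ 0` has a partner root `β` proportional to
`2 H / ‖H‖² - α / ⟪α, H⟫`. This is played against two features of the `F₄` roots: the nonzero
coordinates of a root all have the same absolute value, and no root has exactly three nonzero
coordinates. Probing with `α = e_q` shows that `H` has no three nonzero coordinates: otherwise either
all `|H_i|` agree and `H` is proportional to some `(1, ±1, ±1, ±1)/2`, or `2 H_q² = ‖H‖²` for three
indices `q`. Probing with `α = (1, 1, 1, 1)/2` shows that `H` has no exactly two nonzero coordinates
unless it is proportional to some `e_q ± e_r`; and a single nonzero coordinate makes `H` proportional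
to `e_q`.
-/

section NegPartners

variable {E : Type*} [NormedAddCommGroup E] [InnerProductSpace ℝ E]

def HasNegPartners (R : Set E) (H : E) : Prop :=
  ∀ α ∈ R, ⟪α, H⟫ ≠ 0 → ∃ β ∈ R, ⟪β, H⟫ ≠ 0 ∧
    ⟪β, H⟫⁻¹ • β - (‖H‖ ^ 2)⁻¹ • H = -(⟪α, H⟫⁻¹ • α - (‖H‖ ^ 2)⁻¹ • H)

theorem hasNegPartners_of_neg_image_eq {R S : Set E} {H : E}
    (hS : S = {y | ∃ α ∈ R, ⟪α, H⟫ ≠ 0 ∧ y = ⟪α, H⟫⁻¹ • α - (‖H‖ ^ 2)⁻¹ • H})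
    (hneg : (fun y => -y) '' S = S) : HasNegPartners R H := by
  intro α hα hαH
  have hmem : -(⟪α, H⟫⁻¹ • α - (‖H‖ ^ 2)⁻¹ • H) ∈ S :=
    hneg ▸ ⟨_, hS ▸ ⟨α, hα, hαH, rfl⟩, rfl⟩
  obtain ⟨β, hβ, hβH, h⟩ := hS ▸ hmem
  exact ⟨β, hβ, hβH, h.symm⟩

end NegPartners

theorem HasNegPartners.exists_apply_eq {ι : Type*} [Fintype ι]
    {R : Set (EuclideanSpace ℝ ι)} {H : EuclideanSpace ℝ ι} (hR : HasNegPartners R H)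
    {α : EuclideanSpace ℝ ι} (hα : α ∈ R) (hαH : ⟪α, H⟫ ≠ 0) :
    ∃ β ∈ R, ∃ b ≠ (0 : ℝ), ∀ i, β i = b * (2 * H i / ‖H‖ ^ 2 - α i / ⟪α, H⟫) := by
  obtain ⟨β, hβ, hβH, h⟩ := hR α hα hαH
  refine ⟨β, hβ, _, hβH, fun i => ?_⟩
  have hi := congrArg (· i) h
  simp only [PiLp.sub_apply, PiLp.neg_apply, PiLp.smul_apply, smul_eq_mul] at hi
  rw [← mul_inv_cancel_left₀ hβH (β i)]
  congr 1
  linear_combination hi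

theorem exists_fin_four_ne (q r s : Fin 4) : ∃ j, j ≠ q ∧ j ≠ r ∧ j ≠ s := by
  revert q r s
  decide

local notation "ℝ⁴" => EuclideanSpace ℝ (Fin 4)

def f4PosRoots : Set ℝ⁴ :=
  {x | (∃ i : Fin 4, x = EuclideanSpace.single i (1 : ℝ)) ∨
      (∃ i j : Fin 4, i < j ∧
        (x = EuclideanSpace.single i (1 : ℝ) - EuclideanSpace.single j 1 ∨
         x = EuclideanSpace.single i (1 : ℝ) + EuclideanSpace.single j 1)) ∨
      (∃ ε : Fin 4 → ℝ, (∀ i, ε i = 1 ∨ ε i = -1) ∧ ε 0 = 1 ∧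
        x = (1 / 2 : ℝ) • ∑ i : Fin 4, ε i • EuclideanSpace.single i (1 : ℝ))}

theorem half_sum_single_apply (ε : Fin 4 → ℝ) (j : Fin 4) :
    ((1 / 2 : ℝ) • ∑ i : Fin 4, ε i • EuclideanSpace.single i (1 : ℝ) : ℝ⁴) j = ε j / 2 := by
  simp [Finset.sum_apply, Pi.single_apply]
  ring

namespace f4PosRoots

theorem single_mem (i : Fin 4) : EuclideanSpace.single i (1 : ℝ) ∈ f4PosRoots :=
  Or.inl ⟨i, rfl⟩

theorem exists_mem_forall_apply_eq_half : ∃ ρ ∈ f4PosRoots, ∀ i, ρ i = 1 / 2 :=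
  ⟨_, Or.inr (Or.inr ⟨fun _ => 1, fun _ => Or.inl rfl, rfl, rfl⟩),
    fun i => half_sum_single_apply _ i⟩

theorem sq_apply_eq {x : ℝ⁴} (hx : x ∈ f4PosRoots) {i j : Fin 4} (hi : x i ≠ 0)
    (hj : x j ≠ 0) : x i ^ 2 = x j ^ 2 := by
  rcases hx with ⟨m, rfl⟩ | ⟨m, n, -, rfl | rfl⟩ | ⟨ε, hε, -, rfl⟩
  · simp only [PiLp.single_apply] at *
    split_ifs at * <;> simp_all
  · simp only [PiLp.sub_apply, PiLp.single_apply] at *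
    split_ifs at * <;> simp_all
  · simp only [PiLp.add_apply, PiLp.single_apply] at *
    split_ifs at * <;> simp_all
  · simp only [half_sum_single_apply]
    rcases hε i with h | h <;> rcases hε j with h' | h' <;> rw [h, h'] <;> ring

theorem apply_ne_zero_of_three {x : ℝ⁴} (hx : x ∈ f4PosRoots) {i j k : Fin 4}
    (hij : i ≠ j) (hik : i ≠ k) (hjk : j ≠ k) (hi : x i ≠ 0) (hj : x j ≠ 0) (hk : x k ≠ 0)
    (l : Fin 4) : x l ≠ 0 := by
  rcases hx with ⟨m, rfl⟩ | ⟨m, n, -, rfl | rfl⟩ | ⟨ε, hε, -, rfl⟩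
  · simp only [PiLp.single_apply] at *
    split_ifs at * <;> simp_all
  · simp only [PiLp.sub_apply, PiLp.single_apply] at *
    split_ifs at * <;> simp_all
  · simp only [PiLp.add_apply, PiLp.single_apply] at *
    split_ifs at * <;> simp_all
  · rw [half_sum_single_apply]
    rcases hε l with h | h <;> rw [h] <;> norm_num

theorem exists_eq_smul_of_sq_apply_eq {x : ℝ⁴} (h0 : x 0 ≠ 0)
    (hsq : ∀ i, x i ^ 2 = x 0 ^ 2) : ∃ α ∈ f4PosRoots, x = (2 * x 0) • α := by
  refine ⟨(1 / 2 : ℝ) • ∑ i, (x i / x 0) • EuclideanSpace.single i 1,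
    Or.inr (Or.inr ⟨fun i => x i / x 0, fun i => ?_, div_self h0, rfl⟩), ?_⟩
  · rcases sq_eq_sq_iff_eq_or_eq_neg.1 (hsq i) with h | h
    · exact .inl (by simp [h, h0])
    · exact .inr (by simp [h, h0])
  · ext i
    rw [PiLp.smul_apply, half_sum_single_apply, smul_eq_mul]
    field_simp

theorem apply_eq_of_eq_mul_sub {β : ℝ⁴} (hβ : β ∈ f4PosRoots) {b c : ℝ} (hb : b ≠ 0)
    (hc : c ≠ 0) {d : Fin 4 → ℝ} (hβd : ∀ i, β i = b * (d i - c)) {q r j l : Fin 4}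
    (hjq : j ≠ q) (hjr : j ≠ r) (hlq : l ≠ q) (hlr : l ≠ r) (hlj : l ≠ j) (hdj : d j = 0)
    (hdl : d l = 0) (hq : d q ≠ 0) (hr : d r ≠ 0) : d q = d r := by
  have hβj : β j ≠ 0 := by simpa [hβd, hdj, hb] using hc
  have hβl : β l ≠ 0 := by simpa [hβd, hdl, hb] using hc
  have hvanish : β q = 0 ↔ β r = 0 :=
    ⟨fun h => by_contra fun h' =>
      apply_ne_zero_of_three hβ hjr.symm hlr.symm hlj.symm h' hβj hβl q h,
    fun h => by_contra fun h' =>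
      apply_ne_zero_of_three hβ hjq.symm hlq.symm hlj.symm h' hβj hβl r h⟩
  have hval : ∀ t, d t ≠ 0 → d t = if β t = 0 then c else 2 * c := by
    intro t ht
    split_ifs with h
    · rw [hβd] at h
      linarith [(mul_eq_zero.1 h).resolve_left hb]
    · have hsq := sq_apply_eq hβ h hβj
      rw [hβd, hβd, hdj] at hsq
      have := mul_left_cancel₀ (pow_ne_zero 2 hb)
        (by linear_combination hsq : b ^ 2 * (d t * (d t - 2 * c)) = b ^ 2 * 0)
      linarith [(mul_eq_zero.1 this).resolve_left ht]
  simp only [hval q hq, hval r hr, hvanish]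

end f4PosRoots

theorem sq_add_sq_add_sq_le_norm_sq {ι : Type*} [Fintype ι] (x : EuclideanSpace ℝ ι)
    {i j k : ι} (hij : i ≠ j) (hik : i ≠ k) (hjk : j ≠ k) :
    x i ^ 2 + x j ^ 2 + x k ^ 2 ≤ ‖x‖ ^ 2 := by
  classical
  rw [EuclideanSpace.norm_sq_eq]
  calc x i ^ 2 + x j ^ 2 + x k ^ 2 = ∑ t ∈ {i, j, k}, ‖x t‖ ^ 2 := by
        simp [Finset.sum_insert, hij, hik, hjk, add_assoc]
    _ ≤ ∑ t, ‖x t‖ ^ 2 := Finset.sum_le_univ_sum_of_nonneg fun _ => by positivity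

theorem eq_smul_single {ι : Type*} [Fintype ι] [DecidableEq ι] {x : EuclideanSpace ℝ ι} {i : ι}
    (hx : ∀ k, k ≠ i → x k = 0) : x = x i • EuclideanSpace.single i 1 := by
  ext k
  by_cases hki : k = i
  · subst hki; simp
  simp [hki, hx k hki]

theorem eq_smul_single_add_smul_single {ι : Type*} [Fintype ι] [DecidableEq ι]
    {x : EuclideanSpace ℝ ι} {i j : ι} (hij : i ≠ j) (hx : ∀ k, k ≠ i → k ≠ j → x k = 0) :
    x = x i • EuclideanSpace.single i 1 + x j • EuclideanSpace.single j 1 := by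
  ext k
  by_cases hki : k = i
  · subst hki; simp [hij]
  by_cases hkj : k = j
  · subst hkj; simp [hki]
  simp [hki, hkj, hx k hki hkj]

theorem norm_sq_ne_zero_of_apply_ne_zero_s15 {ι : Type*} [Fintype ι] {x : EuclideanSpace ℝ ι}
    {i : ι} (hi : x i ≠ 0) : ‖x‖ ^ 2 ≠ 0 := by
  have hx : x ≠ 0 := fun h => hi (by simp [h])
  positivity

namespace HasNegPartners

variable {H : ℝ⁴}

theorem exists_of_apply_ne_zero (hR : HasNegPartners f4PosRoots H) {q : Fin 4}
    (hq : H q ≠ 0) : ∃ β ∈ f4PosRoots, ∃ b ≠ (0 : ℝ),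
      β q = b * (2 * H q / ‖H‖ ^ 2 - 1 / H q) ∧ ∀ i ≠ q, β i = b * (2 * H i / ‖H‖ ^ 2) := by
  have hqH : ⟪EuclideanSpace.single q (1 : ℝ), H⟫ = H q := by
    simp [EuclideanSpace.inner_single_left]
  obtain ⟨β, hβ, b, hb, hβi⟩ :=
    hR.exists_apply_eq (f4PosRoots.single_mem q) (hqH.symm ▸ hq)
  refine ⟨β, hβ, b, hb, by simp [hβi, hqH], fun i hi => by simp [hβi, hi]⟩

theorem sq_apply_eq (hR : HasNegPartners f4PosRoots H) {q r s : Fin 4}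
    (hqr : q ≠ r) (hqs : q ≠ s) (hq : H q ≠ 0) (hr : H r ≠ 0) (hs : H s ≠ 0) :
    H r ^ 2 = H s ^ 2 := by
  obtain ⟨β, hβ, b, hb, -, hβi⟩ := hR.exists_of_apply_ne_zero hq
  have hk := norm_sq_ne_zero_of_apply_ne_zero_s15 hq
  have hβr : β r ≠ 0 := by rw [hβi r hqr.symm]; positivity
  have hβs : β s ≠ 0 := by rw [hβi s hqs.symm]; positivity
  have hβrs := f4PosRoots.sq_apply_eq hβ hβr hβs
  rw [hβi r hqr.symm, hβi s hqs.symm] at hβrs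
  have hc : (2 * b / ‖H‖ ^ 2) ^ 2 ≠ 0 := by positivity
  exact mul_left_cancel₀ hc (by linear_combination hβrs)

theorem two_mul_sq_eq_norm_sq (hR : HasNegPartners f4PosRoots H) {q r s j : Fin 4}
    (hqr : q ≠ r) (hqs : q ≠ s) (hrs : r ≠ s) (hq : H q ≠ 0) (hr : H r ≠ 0) (hs : H s ≠ 0)
    (hj : H j = 0) : 2 * H q ^ 2 = ‖H‖ ^ 2 := by
  obtain ⟨β, hβ, b, hb, hβq, hβi⟩ := hR.exists_of_apply_ne_zero hq
  have hk := norm_sq_ne_zero_of_apply_ne_zero_s15 hq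
  have hjq : j ≠ q := by rintro rfl; exact hq hj
  have hβr : β r ≠ 0 := by rw [hβi r hqr.symm]; positivity
  have hβs : β s ≠ 0 := by rw [hβi s hqs.symm]; positivity
  have hβj : β j = 0 := by rw [hβi j hjq, hj]; ring
  have hβq0 : β q = 0 := by
    by_contra h
    exact f4PosRoots.apply_ne_zero_of_three hβ hqr hqs hrs h hβr hβs j hβj
  rw [hβq] at hβq0
  have := (mul_eq_zero.1 hβq0).resolve_left hb
  rw [sub_eq_zero, div_eq_div_iff hk hq] at this
  linear_combination this

theorem exists_apply_eq_zero (hR : HasNegPartners f4PosRoots H)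
    (hprop : ∀ α ∈ f4PosRoots, ∀ c : ℝ, H ≠ c • α) : ∃ j, H j = 0 := by
  by_contra! hne
  refine absurd (f4PosRoots.exists_eq_smul_of_sq_apply_eq (hne 0) fun i => ?_) ?_
  · obtain ⟨q, hqi, hq0, -⟩ := exists_fin_four_ne i 0 0
    exact hR.sq_apply_eq hqi hq0 (hne q) (hne i) (hne 0)
  · rintro ⟨α, hα, hHα⟩
    exact hprop α hα _ hHα

theorem false_of_three_apply_ne_zero (hR : HasNegPartners f4PosRoots H)
    (hprop : ∀ α ∈ f4PosRoots, ∀ c : ℝ, H ≠ c • α) {q r s : Fin 4}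
    (hqr : q ≠ r) (hqs : q ≠ s) (hrs : r ≠ s) (hq : H q ≠ 0) (hr : H r ≠ 0) (hs : H s ≠ 0) :
    False := by
  obtain ⟨j, hj⟩ := hR.exists_apply_eq_zero hprop
  have hq2 := hR.two_mul_sq_eq_norm_sq hqr hqs hrs hq hr hs hj
  have hr2 := hR.two_mul_sq_eq_norm_sq hqr.symm hrs hqs hr hq hs hj
  have hs2 := hR.two_mul_sq_eq_norm_sq hqs.symm hrs.symm hqr hs hq hr hj
  have hle := sq_add_sq_add_sq_le_norm_sq H hqr hqs hrs
  have hpos : 0 < ‖H‖ ^ 2 := (norm_sq_ne_zero_of_apply_ne_zero_s15 hq).symm.lt_of_le (by positivity)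
  linarith

theorem false_of_two_apply_ne_zero (hR : HasNegPartners f4PosRoots H)
    (hprop : ∀ α ∈ f4PosRoots, ∀ c : ℝ, H ≠ c • α) {q r : Fin 4} (hqr : q < r)
    (hq : H q ≠ 0) (hr : H r ≠ 0) (hzero : ∀ i, i ≠ q → i ≠ r → H i = 0) : False := by
  have hH : H = H q • EuclideanSpace.single q 1 + H r • EuclideanSpace.single r 1 :=
    eq_smul_single_add_smul_single hqr.ne hzero
  have hsub : H r ≠ -H q := fun h => hprop _ (Or.inr (Or.inl ⟨q, r, hqr, .inl rfl⟩)) (H q)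
    (hH.trans (by rw [h, neg_smul, smul_sub, sub_eq_add_neg]))
  have hadd : H r ≠ H q := fun h => hprop _ (Or.inr (Or.inl ⟨q, r, hqr, .inr rfl⟩)) (H q)
    (hH.trans (by rw [h, smul_add]))
  obtain ⟨ρ, hρ, hρi⟩ := f4PosRoots.exists_mem_forall_apply_eq_half
  have hρH : ⟪ρ, H⟫ ≠ 0 := by
    have hsum : ∑ i, H i = H q + H r :=
      Finset.sum_eq_add q r hqr.ne (fun i _ hi => hzero i hi.1 hi.2) (by simp) (by simp)
    simp only [PiLp.inner_apply, hρi, RCLike.inner_apply, conj_trivial, ← Finset.sum_mul, hsum]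
    exact mul_ne_zero (fun h => hsub (by linarith)) (by norm_num)
  obtain ⟨β, hβ, b, hb, hβi⟩ := hR.exists_apply_eq hρ hρH
  obtain ⟨c, hc, hβi⟩ : ∃ c ≠ (0 : ℝ), ∀ i, β i = b * (2 * H i / ‖H‖ ^ 2 - c) :=
    ⟨1 / 2 / ⟪ρ, H⟫, div_ne_zero (by norm_num) hρH, by simpa only [hρi] using hβi⟩
  have hk := norm_sq_ne_zero_of_apply_ne_zero_s15 hq
  obtain ⟨j, hjq, hjr, -⟩ := exists_fin_four_ne q r r
  obtain ⟨l, hlq, hlr, hlj⟩ := exists_fin_four_ne q r j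
  have hqr' : 2 * H q / ‖H‖ ^ 2 = 2 * H r / ‖H‖ ^ 2 :=
    f4PosRoots.apply_eq_of_eq_mul_sub hβ hb hc hβi hjq hjr hlq hlr hlj
      (by simp [hzero j hjq hjr]) (by simp [hzero l hlq hlr]) (by positivity) (by positivity)
  rw [div_left_inj' hk] at hqr'
  exact hadd (by linarith)

end HasNegPartners

/-- For the root system of type `F₄`, no orbit other than those through
restricted root vectors is austere: for every nonzero `H ∈ ℝ⁴` not proportional
to any positive root, the set `S_H = {α/⟪α,H⟫ - H/‖H‖²}` is not invariant under
negation. -/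
theorem stmt_15
    (Rp : Set (EuclideanSpace ℝ (Fin 4)))
    (hRp : Rp = {x | (∃ i : Fin 4, x = EuclideanSpace.single i (1 : ℝ)) ∨
      (∃ i j : Fin 4, i < j ∧
        (x = EuclideanSpace.single i (1 : ℝ) - EuclideanSpace.single j 1 ∨
         x = EuclideanSpace.single i (1 : ℝ) + EuclideanSpace.single j 1)) ∨
      (∃ ε : Fin 4 → ℝ, (∀ i, ε i = 1 ∨ ε i = -1) ∧ ε 0 = 1 ∧
        x = (1 / 2 : ℝ) • ∑ i : Fin 4, ε i • EuclideanSpace.single i (1 : ℝ))})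
    (H : EuclideanSpace ℝ (Fin 4)) (hH : H ≠ 0)
    (hprop : ∀ α ∈ Rp, ∀ c : ℝ, H ≠ c • α)
    (S : Set (EuclideanSpace ℝ (Fin 4)))
    (hS : S = {y | ∃ α ∈ Rp, ⟪α, H⟫ ≠ 0 ∧ y = (⟪α, H⟫)⁻¹ • α - (‖H‖ ^ 2)⁻¹ • H}) :
    (fun y => -y) '' S ≠ S := by
  change Rp = f4PosRoots at hRp
  subst hRp
  intro hneg
  have hR := hasNegPartners_of_neg_image_eq hS hneg
  obtain ⟨q, hq⟩ : ∃ q, H q ≠ 0 := by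
    by_contra! h
    exact hH (by ext i; simp [h i])
  by_cases hr : ∃ r, r ≠ q ∧ H r ≠ 0
  · obtain ⟨r, hrq, hr⟩ := hr
    by_cases hs : ∃ s, s ≠ q ∧ s ≠ r ∧ H s ≠ 0
    · obtain ⟨s, hsq, hsr, hs⟩ := hs
      exact hR.false_of_three_apply_ne_zero hprop hrq.symm hsq.symm hsr.symm hq hr hs
    · push Not at hs
      rcases lt_or_gt_of_ne hrq with h | h
      · exact hR.false_of_two_apply_ne_zero hprop h hr hq fun i hir hiq => hs i hiq hir
      · exact hR.false_of_two_apply_ne_zero hprop h hq hr hs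
  · push Not at hr
    exact hprop _ (f4PosRoots.single_mem q) (H q) (eq_smul_single hr)
end

section
/- Let R₊ ⊂ ℝ⁸ be the set of positive roots of type E₈: R₊ = {−e_i + e_j, e_i + e_j : 1 ≤ i < j ≤ 8} ∪ {½(e₈ + Σ_{i=1}^{7} (−1)^{ν(i)} e_i) : ν : {1,…,7} → {0,1} with Σ_{i=1}^{7} ν(i) even}. Then for every nonzero H ∈ ℝ⁸ that is not proportional to any element of R₊, the set S_H = {v_H(α) : α ∈ R₊, ⟪α,H⟫ ≠ 0}, where v_H(α) = α/⟪α,H⟫ − H/‖H‖², is NOT invariant under negation: S_H ≠ −S_H. -/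
/-!
If `S_H = -S_H`, then for every root `γ` with `⟪γ, H⟫ ≠ 0` some root `β` satisfies
`-v_H(γ) = v_H(β)`, which forces `β = ±s_H(γ)` for the reflection `s_H` in `H^⊥`. Hence `s_H` maps
the roots into the `E₈` lattice `L`, and `w = γ - s_H(γ)` is a nonzero vector of `L` on the line
`ℝH`. Writing `‖w‖² = 2k`, integrality of `⟪γ, s_H γ⟫` gives `k ∣ ⟪γ, w⟫²` for every root `γ`, so
for a prime `p ∣ k` all `⟪γ, w / p⟫` are integers and `w / p ∈ L` because `L` is unimodular.
Descending on `k`, the line `ℝH` contains a vector of `L` of norm `2`, that is a root up to sign,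
which contradicts the hypothesis on `H`.
-/

open scoped RealInnerProductSpace
open Finset

lemma exists_sum_eq_and_prod_eq_neg_one_pow {R ι : Type*} [CommRing R] [Fintype ι]
    {a : ι → R} (h : ∀ i, a i = 1 ∨ a i = -1) :
    ∃ c : ℕ, ∑ i, a i = Fintype.card ι - 2 * c ∧ ∏ i, a i = (-1) ^ c := by
  classical
  have ha : ∀ i, a i = if a i = -1 then -1 else 1 := fun i => by
    rcases h i with h | h <;> simp [h]
  have hcard := card_filter_add_card_filter_not (s := univ) (fun i => a i = -1)
  rw [card_univ] at hcard
  refine ⟨#{i | a i = -1}, ?_, ?_⟩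
  · rw [sum_congr rfl fun i _ => ha i, sum_ite, ← hcard]
    simp only [sum_const, nsmul_eq_mul, mul_neg, mul_one]
    push_cast; ring
  · rw [prod_congr rfl fun i _ => ha i, prod_ite]
    simp

lemma Int.eight_dvd_sum_sq {a : Fin 8 → ℤ} (hpar : ∀ i j, a i % 2 = a j % 2)
    (hsum : 4 ∣ ∑ i, a i) : 8 ∣ ∑ i, a i ^ 2 := by
  rcases Int.emod_two_eq (a 0) with h0 | h0
  · have h : ∀ i, 8 ∣ a i ^ 2 - 2 * a i := fun i => by
      have := Int.eight_dvd_sq_sub_one_of_odd (k := a i - 1)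
        (by have := hpar i 0; rw [Int.odd_iff]; omega)
      convert this using 1; ring
    have := dvd_sum fun i (_ : i ∈ univ) => h i
    rw [sum_sub_distrib, ← mul_sum] at this
    omega
  · have h : ∀ i, 8 ∣ a i ^ 2 - 1 := fun i =>
      Int.eight_dvd_sq_sub_one_of_odd (by have := hpar i 0; rw [Int.odd_iff]; omega)
    have := dvd_sum fun i (_ : i ∈ univ) => h i
    simp only [sum_sub_distrib, sum_const, card_univ, Fintype.card_fin, nsmul_eq_mul,
      Nat.cast_ofNat, mul_one] at this
    omega

lemma exists_intCast_eq_of_forall_eq_one_or {ι : Type*} {ε : ι → ℝ}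
    (hε : ∀ i, ε i = 1 ∨ ε i = -1) :
    ∃ n : ι → ℤ, (∀ i, n i = 1 ∨ n i = -1) ∧ ε = fun i => (n i : ℝ) := by
  have : ∀ i, ∃ z : ℤ, (z = 1 ∨ z = -1) ∧ ε i = z := fun i => by
    rcases hε i with h | h
    exacts [⟨1, by simp [h]⟩, ⟨-1, by simp [h]⟩]
  choose n hn using this
  exact ⟨n, fun i => (hn i).1, funext fun i => (hn i).2⟩

section Reflection

variable {F : Type*} [NormedAddCommGroup F] [InnerProductSpace ℝ F]

lemma reflection_orthogonal_span_singleton_apply (v x : F) :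
    (ℝ ∙ v)ᗮ.reflection x = x - (2 * ⟪v, x⟫ / ‖v‖ ^ 2) • v := by
  rw [Submodule.reflection_orthogonal_apply, Submodule.reflection_apply,
    Submodule.starProjection_singleton]
  simp only [RCLike.ofReal_real_eq_id, id]
  module

lemma eq_or_eq_neg_of_eq_smul_of_norm_eq {u v : F} {c : ℝ} (h : u = c • v) (hn : ‖u‖ = ‖v‖)
    (hv : v ≠ 0) : u = v ∨ u = -v := by
  have hc : |c| = 1 := by
    rw [h, norm_smul, Real.norm_eq_abs] at hn
    exact (mul_eq_right₀ (norm_ne_zero_iff.2 hv)).1 hn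
  rcases (abs_eq zero_le_one).1 hc with rfl | rfl
  · simp [h]
  · simp [h]

lemma reflection_orthogonal_span_singleton_smul {c : ℝ} (hc : c ≠ 0) (v x : F) :
    (ℝ ∙ c • v)ᗮ.reflection x = (ℝ ∙ v)ᗮ.reflection x := by
  simp only [reflection_orthogonal_span_singleton_apply, real_inner_smul_left, norm_smul,
    Real.norm_eq_abs, mul_pow, sq_abs, smul_smul]
  congr 2
  by_cases hv : v = 0
  · simp [hv]
  field_simp

noncomputable def vH (H α : F) : F := ⟪α, H⟫⁻¹ • α - (‖H‖ ^ 2)⁻¹ • H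

lemma reflection_eq_or_eq_neg_of_neg_vH_eq {H γ β : F} (hγ : ⟪γ, H⟫ ≠ 0) (hβ : ⟪β, H⟫ ≠ 0)
    (hnorm : ‖β‖ = ‖γ‖) (h : -vH H γ = vH H β) :
    (ℝ ∙ H)ᗮ.reflection γ = β ∨ (ℝ ∙ H)ᗮ.reflection γ = -β := by
  have hβ' : β = ⟪β, H⟫ • (-vH H γ + (‖H‖ ^ 2)⁻¹ • H) := by
    rw [h, vH, sub_add_cancel, smul_inv_smul₀ hβ]
  have hprop : β = (-(⟪β, H⟫ / ⟪γ, H⟫)) • (ℝ ∙ H)ᗮ.reflection γ := by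
    rw [reflection_orthogonal_span_singleton_apply, real_inner_comm γ H]
    conv_lhs => rw [hβ']
    rw [vH]
    match_scalars <;> field_simp
    ring
  have hγ₀ : (ℝ ∙ H)ᗮ.reflection γ ≠ 0 := by
    rw [← norm_ne_zero_iff, LinearIsometryEquiv.norm_map, norm_ne_zero_iff]
    rintro rfl
    simp at hγ
  rcases eq_or_eq_neg_of_eq_smul_of_norm_eq hprop
    (by rw [hnorm, LinearIsometryEquiv.norm_map]) hγ₀ with h | h
  · exact .inl h.symm
  · exact .inr (by rw [h, neg_neg])

end Reflection

namespace E8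

local notation "𝔼" => EuclideanSpace ℝ (Fin 8)

lemma inner_eq_sum_mul (x y : 𝔼) : ⟪x, y⟫ = ∑ i, x i * y i := by
  simp [PiLp.inner_apply, mul_comm]

/-- The `E₈` lattice `{x ∈ ℤ⁸ ∪ (ℤ + ½)⁸ | ∑ xᵢ ∈ 2ℤ}`, described by the doubled coordinates
`a = 2x`. -/
def lattice : AddSubgroup 𝔼 where
  carrier := {x | ∃ a : Fin 8 → ℤ, (∀ i, 2 * x i = a i) ∧ (∀ i j, a i % 2 = a j % 2) ∧
    4 ∣ ∑ i, a i}
  zero_mem' := ⟨0, by simp, by simp, by simp⟩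
  add_mem' := by
    rintro x y ⟨a, ha, hpa, hsa⟩ ⟨b, hb, hpb, hsb⟩
    refine ⟨a + b, fun i => ?_, fun i j => ?_, ?_⟩
    · simp [mul_add, ha, hb]
    · have := hpa i j; have := hpb i j; simp only [Pi.add_apply]; omega
    · simpa [sum_add_distrib] using dvd_add hsa hsb
  neg_mem' := by
    rintro x ⟨a, ha, hpa, hsa⟩
    refine ⟨-a, fun i => ?_, fun i j => ?_, ?_⟩
    · simp [ha]
    · have := hpa i j; simp only [Pi.neg_apply]; omega
    · simpa using hsa

lemma exists_inner_self_eq_two_mul {x : 𝔼} (hx : x ∈ lattice) :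
    ∃ m : ℕ, ⟪x, x⟫ = 2 * m := by
  obtain ⟨a, ha, hpar, hsum⟩ := hx
  obtain ⟨m, hm⟩ := Int.eight_dvd_sum_sq hpar hsum
  have hm0 : 0 ≤ m := by
    have : 0 ≤ ∑ i, a i ^ 2 := sum_nonneg fun i _ => sq_nonneg _
    omega
  lift m to ℕ using hm0
  refine ⟨m, ?_⟩
  have : ⟪x, x⟫ = (∑ i, a i ^ 2 : ℤ) / 4 := by
    rw [inner_eq_sum_mul]; push_cast; rw [sum_div]
    exact sum_congr rfl fun i _ => by rw [← ha i]; ring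
  rw [this, hm]; push_cast; ring

lemma exists_inner_eq_intCast {x y : 𝔼} (hx : x ∈ lattice) (hy : y ∈ lattice) :
    ∃ m : ℤ, ⟪x, y⟫ = m := by
  obtain ⟨m, hm⟩ := exists_inner_self_eq_two_mul (add_mem hx hy)
  obtain ⟨m₁, hm₁⟩ := exists_inner_self_eq_two_mul hx
  obtain ⟨m₂, hm₂⟩ := exists_inner_self_eq_two_mul hy
  refine ⟨m - m₁ - m₂, ?_⟩
  rw [inner_add_left, inner_add_right, inner_add_right, real_inner_comm x y] at hm
  push_cast; linarith

lemma smul_single_add_smul_single_mem_lattice (i j : Fin 8) {c d : ℤ}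
    (hcd : Even (c + d)) :
    (c : ℝ) • EuclideanSpace.single i 1 + (d : ℝ) • EuclideanSpace.single j 1 ∈ lattice := by
  classical
  refine ⟨fun k => 2 * ((if k = i then c else 0) + if k = j then d else 0), fun k => ?_,
    fun k l => ?_, ?_⟩
  · simp
  · simp only; omega
  · obtain ⟨e, he⟩ := hcd
    rw [← mul_sum, sum_add_distrib, sum_ite_eq', sum_ite_eq']
    exact ⟨e, by simp; omega⟩

noncomputable def halfRoot (ε : Fin 7 → ℝ) : 𝔼 :=
  (1 / 2 : ℝ) • (EuclideanSpace.single 7 1 + ∑ i, ε i • EuclideanSpace.single i.castSucc 1)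

lemma castSucc_ne_seven (i : Fin 7) : i.castSucc ≠ (7 : Fin 8) := (Fin.castSucc_lt_last i).ne

@[simp] lemma halfRoot_apply_castSucc (ε : Fin 7 → ℝ) (i : Fin 7) :
    halfRoot ε i.castSucc = ε i / 2 := by
  simp [halfRoot, Finset.sum_apply, Pi.single_apply, castSucc_ne_seven]
  ring

@[simp] lemma halfRoot_apply_seven (ε : Fin 7 → ℝ) : halfRoot ε 7 = 1 / 2 := by
  simp [halfRoot, Finset.sum_apply, (castSucc_ne_seven _).symm]

lemma inner_halfRoot_left (ε : Fin 7 → ℝ) (y : 𝔼) :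
    ⟪halfRoot ε, y⟫ = (∑ i, ε i * y i.castSucc + y 7) / 2 := by
  rw [inner_eq_sum_mul, Fin.sum_univ_castSucc]
  simp [add_div, sum_div, div_mul_eq_mul_div, inv_mul_eq_div]

lemma halfRoot_mem_lattice {ε : Fin 7 → ℝ} (hε : ∀ i, ε i = 1 ∨ ε i = -1)
    (hprod : ∏ i, ε i = 1) : halfRoot ε ∈ lattice := by
  obtain ⟨n, hn, rfl⟩ := exists_intCast_eq_of_forall_eq_one_or hε
  replace hprod : ∏ i, n i = 1 := by
    have : ((∏ i, n i : ℤ) : ℝ) = 1 := by push_cast; exact hprod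
    exact_mod_cast this
  obtain ⟨c, hsum, hc⟩ := exists_sum_eq_and_prod_eq_neg_one_pow hn
  obtain ⟨d, rfl⟩ : Even c := by
    by_contra hodd; rw [Nat.not_even_iff_odd] at hodd; rw [hodd.neg_one_pow] at hc; omega
  refine ⟨Fin.snoc (α := fun _ => ℤ) n 1, fun k => ?_, fun k l => ?_, ?_⟩
  · refine Fin.lastCases ?_ (fun i => ?_) k
    · rw [Fin.snoc_last]; simp
    · simp [mul_div_cancel₀]
  · have h : ∀ k, (Fin.snoc (α := fun _ => ℤ) n 1 k : ℤ) % 2 = 1 := fun k => by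
      refine Fin.lastCases ?_ (fun i => ?_) k
      · rw [Fin.snoc_last]; rfl
      · rcases hn i with h | h <;> simp [h]
    rw [h, h]
  · rw [Fin.sum_univ_castSucc]
    simp only [Fin.snoc_castSucc, Fin.snoc_last, hsum, Fintype.card_fin]
    exact ⟨2 - d, by push_cast; ring⟩

def posRoots : Set 𝔼 :=
  {x | (∃ i j : Fin 8, i < j ∧ (x = -EuclideanSpace.single i 1 + EuclideanSpace.single j 1 ∨
      x = EuclideanSpace.single i 1 + EuclideanSpace.single j 1)) ∨
    ∃ ε : Fin 7 → ℝ, (∀ i, ε i = 1 ∨ ε i = -1) ∧ ∏ i, ε i = 1 ∧ x = halfRoot ε}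

lemma smul_single_add_single_mem_posRoots {i j : Fin 8} (hij : i < j) {σ : ℝ}
    (hσ : σ = 1 ∨ σ = -1) :
    σ • EuclideanSpace.single i 1 + EuclideanSpace.single j 1 ∈ posRoots := by
  rcases hσ with rfl | rfl
  · exact Or.inl ⟨i, j, hij, Or.inr (by simp)⟩
  · exact Or.inl ⟨i, j, hij, Or.inl (by simp)⟩

lemma mem_lattice_of_mem_posRoots {α : 𝔼} (hα : α ∈ posRoots) : α ∈ lattice := by
  rcases hα with ⟨i, j, -, rfl | rfl⟩ | ⟨ε, hε, hprod, rfl⟩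
  · simpa using smul_single_add_smul_single_mem_lattice i j (c := -1) (d := 1) (by decide)
  · simpa using smul_single_add_smul_single_mem_lattice i j (c := 1) (d := 1) (by decide)
  · exact halfRoot_mem_lattice hε hprod

lemma inner_self_eq_two_of_mem_posRoots {α : 𝔼} (hα : α ∈ posRoots) : ⟪α, α⟫ = 2 := by
  rcases hα with ⟨i, j, hij, rfl | rfl⟩ | ⟨ε, hε, -, rfl⟩
  · rw [inner_add_left, inner_neg_left, EuclideanSpace.inner_single_left,
      EuclideanSpace.inner_single_left]
    simp [hij.ne, hij.ne']
    norm_num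
  · rw [inner_add_left, EuclideanSpace.inner_single_left, EuclideanSpace.inner_single_left]
    simp [hij.ne, hij.ne']
    norm_num
  · have : ∀ i, ε i * (ε i / 2) = 1 / 2 := fun i => by
      rcases hε i with h | h <;> norm_num [h]
    simp only [inner_halfRoot_left, halfRoot_apply_castSucc, halfRoot_apply_seven, this]
    norm_num

lemma inner_single_add_single_left (σ : ℝ) (i j : Fin 8) (y : 𝔼) :
    ⟪σ • EuclideanSpace.single i 1 + EuclideanSpace.single j 1, y⟫ = σ * y i + y j := by
  rw [inner_add_left, real_inner_smul_left, EuclideanSpace.inner_single_left,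
    EuclideanSpace.inner_single_left]
  simp

lemma exists_intCast_add_and_sub_of_ne {y : 𝔼} (h : ∀ α ∈ posRoots, ∃ m : ℤ, ⟪α, y⟫ = m)
    {i j : Fin 8} (hij : i ≠ j) : (∃ m : ℤ, y i + y j = m) ∧ ∃ m : ℤ, y i - y j = m := by
  rcases hij.lt_or_gt with hij | hij
  · obtain ⟨m, hm⟩ := h _ (smul_single_add_single_mem_posRoots hij (Or.inl rfl))
    obtain ⟨m', hm'⟩ := h _ (smul_single_add_single_mem_posRoots hij (Or.inr rfl))
    rw [inner_single_add_single_left] at hm hm'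
    exact ⟨⟨m, by linarith⟩, ⟨-m', by push_cast; linarith⟩⟩
  · obtain ⟨m, hm⟩ := h _ (smul_single_add_single_mem_posRoots hij (Or.inl rfl))
    obtain ⟨m', hm'⟩ := h _ (smul_single_add_single_mem_posRoots hij (Or.inr rfl))
    rw [inner_single_add_single_left] at hm hm'
    exact ⟨⟨m, by linarith⟩, ⟨m', by linarith⟩⟩

lemma mem_lattice_of_forall_inner_posRoots {y : 𝔼}
    (h : ∀ α ∈ posRoots, ∃ m : ℤ, ⟪α, y⟫ = m) : y ∈ lattice := by
  have hdouble : ∀ i, ∃ m : ℤ, 2 * y i = m := fun i => by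
    obtain ⟨j, hji⟩ := exists_ne i
    obtain ⟨⟨m, hm⟩, ⟨m', hm'⟩⟩ := exists_intCast_add_and_sub_of_ne h hji.symm
    exact ⟨m + m', by push_cast; linarith⟩
  choose a ha using hdouble
  refine ⟨a, ha, fun i j => ?_, ?_⟩
  · obtain rfl | hij := eq_or_ne i j
    · rfl
    obtain ⟨m, hm⟩ := (exists_intCast_add_and_sub_of_ne h hij).1
    have : a i + a j = 2 * m := by exact_mod_cast (show (a i + a j : ℝ) = 2 * m by
      rw [← ha, ← ha]; linarith)
    omega
  · obtain ⟨m, hm⟩ := h _ (Or.inr ⟨1, fun _ => Or.inl rfl, by simp, rfl⟩)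
    simp only [inner_halfRoot_left, Pi.one_apply, one_mul] at hm
    refine ⟨m, ?_⟩
    have : (∑ i, a i : ℝ) = 4 * m := by
      simp only [← ha, ← mul_sum]
      rw [Fin.sum_univ_castSucc]
      exact (by linarith : 2 * (∑ i : Fin 7, y i.castSucc + y 7) = 4 * m)
    exact_mod_cast this

lemma exists_mem_posRoots_inner_ne_zero {H : 𝔼} (hH : H ≠ 0) :
    ∃ α ∈ posRoots, ⟪α, H⟫ ≠ 0 := by
  by_contra! h
  refine hH (PiLp.ext fun i => ?_)
  obtain ⟨j, hji⟩ := exists_ne i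
  rcases hji.lt_or_gt with hij | hij <;>
  · have h₁ := h _ (smul_single_add_single_mem_posRoots hij (Or.inl rfl))
    have h₂ := h _ (smul_single_add_single_mem_posRoots hij (Or.inr rfl))
    rw [inner_single_add_single_left] at h₁ h₂
    simp only [PiLp.zero_apply]
    linarith

lemma exists_mem_posRoots_of_sum_sq_eq_two {x : 𝔼} {s : Fin 8 → ℤ} (hx : ∀ i, x i = s i)
    (hs : ∑ i, s i ^ 2 = 2) : ∃ α ∈ posRoots, x = α ∨ x = -α := by
  classical
  have hs₁ : ∀ i, s i = 0 ∨ s i = 1 ∨ s i = -1 := fun i => by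
    have : s i ^ 2 ≤ 2 := hs ▸ single_le_sum (fun j _ => sq_nonneg (s j)) (mem_univ i)
    have : -1 ≤ s i := by nlinarith
    have : s i ≤ 1 := by nlinarith
    omega
  have hcard : #{i | s i ≠ 0} = 2 := by
    have : ∑ i, s i ^ 2 = #{i | s i ≠ 0} := by
      rw [card_filter]; push_cast
      exact sum_congr rfl fun i _ => by rcases hs₁ i with h | h | h <;> simp [h]
    omega
  obtain ⟨p, q, hpq, hpq'⟩ := card_eq_two.1 hcard
  wlog hlt : p < q generalizing p q
  · exact this q p hpq.symm (by rw [hpq', pair_comm]) (hpq.lt_or_gt.resolve_left hlt)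
  have hsupp : ∀ i, s i ≠ 0 ↔ i = p ∨ i = q := fun i => by
    simpa using congrArg (i ∈ ·) hpq'
  have hsign : ∀ i, s i ≠ 0 → (s i : ℝ) = 1 ∨ (s i : ℝ) = -1 := fun i hi => by
    rcases hs₁ i with h | h | h <;> simp_all
  have hp := hsign p ((hsupp p).2 (Or.inl rfl))
  have hq := hsign q ((hsupp q).2 (Or.inr rfl))
  have hx' : x = (s q : ℝ) • ((s p * s q : ℝ) • EuclideanSpace.single p 1 +
      EuclideanSpace.single q 1) := by
    ext k
    simp only [hx, PiLp.smul_apply, PiLp.add_apply, PiLp.single_apply, smul_eq_mul]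
    by_cases hkp : k = p
    · subst hkp; rcases hq with h | h <;> simp [h, hpq]
    by_cases hkq : k = q
    · subst hkq; simp [hkp]
    · simp [hkp, hkq, not_not.1 (mt (hsupp k).1 (by tauto))]
  refine ⟨_, smul_single_add_single_mem_posRoots hlt (σ := s p * s q) ?_, ?_⟩
  · rcases hp with h | h <;> rcases hq with h' | h' <;> simp [h, h']
  · rcases hq with h | h
    · exact .inl (by rw [hx', h, one_smul])
    · exact .inr (by rw [hx', h, neg_one_smul])

lemma exists_mem_posRoots_of_forall_eq_one_or {x : 𝔼} {a : Fin 8 → ℤ}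
    (hx : ∀ i, 2 * x i = a i) (ha : ∀ i, a i = 1 ∨ a i = -1) (hsum : 4 ∣ ∑ i, a i) :
    ∃ α ∈ posRoots, x = α ∨ x = -α := by
  obtain ⟨c, hc, hprod⟩ := exists_sum_eq_and_prod_eq_neg_one_pow ha
  obtain ⟨d, rfl⟩ : Even c := by
    rw [hc] at hsum; simp only [Fintype.card_fin] at hsum; rw [Nat.even_iff]; omega
  have hprod' : (∏ i : Fin 7, a i.castSucc) * a 7 = 1 := by
    rw [show (∏ i : Fin 7, a i.castSucc) * a 7 = ∏ i, a i from
      (Fin.prod_univ_castSucc a).symm, hprod, Even.neg_one_pow ⟨d, rfl⟩]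
  set n : Fin 7 → ℤ := fun i => a 7 * a i.castSucc
  have hn : ∀ i, n i = 1 ∨ n i = -1 := fun i => by
    rcases ha 7 with h | h <;> rcases ha i.castSucc with h' | h' <;> simp [n, h, h']
  have hnprod : ∏ i, (n i : ℝ) = 1 := by
    have : ∏ i, n i = 1 := by
      simp only [n, prod_mul_distrib, prod_const, card_univ, Fintype.card_fin]
      rcases ha 7 with h | h <;> rw [h] at hprod' ⊢ <;> linarith
    exact_mod_cast this
  have hx' : x = (a 7 : ℝ) • halfRoot (fun i => n i) := by
    ext k
    refine Fin.lastCases ?_ (fun i => ?_) k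
    · have := hx 7; simp only [PiLp.smul_apply, smul_eq_mul]
      rw [show (Fin.last 7) = (7 : Fin 8) from rfl, halfRoot_apply_seven]; linarith
    · have := hx i.castSucc
      have h7 : (a 7 : ℝ) * a 7 = 1 := by rcases ha 7 with h | h <;> simp [h]
      simp only [PiLp.smul_apply, smul_eq_mul, halfRoot_apply_castSucc, n]
      push_cast
      linear_combination (1 / 2 : ℝ) * this - (a i.castSucc / 2 : ℝ) * h7
  refine ⟨_, Or.inr ⟨_, fun i => ?_, hnprod, rfl⟩, ?_⟩
  · rcases hn i with h | h <;> simp [h]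
  · rcases ha 7 with h | h
    · exact .inl (by rw [hx', h]; simp)
    · exact .inr (by rw [hx', h]; simp)

lemma exists_mem_posRoots_eq_or_eq_neg {x : 𝔼} (hx : x ∈ lattice) (hx₂ : ⟪x, x⟫ = 2) :
    ∃ α ∈ posRoots, x = α ∨ x = -α := by
  obtain ⟨a, ha, hpar, hsum⟩ := hx
  have hsq : ∑ i, a i ^ 2 = 8 := by
    have : (∑ i, a i ^ 2 : ℝ) = 4 * ⟪x, x⟫ := by
      rw [inner_eq_sum_mul, mul_sum]
      exact sum_congr rfl fun i _ => by rw [← ha]; ring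
    rw [hx₂] at this
    norm_num at this
    exact_mod_cast this
  have hle : ∀ i, a i ^ 2 ≤ 8 := fun i =>
    hsq ▸ single_le_sum (fun j _ => sq_nonneg (a j)) (mem_univ i)
  rcases Int.emod_two_eq (a 0) with h0 | h0
  · have heven : ∀ i, a i = 2 * (a i / 2) := fun i => by have := hpar i 0; omega
    refine exists_mem_posRoots_of_sum_sq_eq_two (s := fun i => a i / 2) (fun i => ?_) ?_
    · have := ha i; rw [heven i] at this; push_cast at this; linarith
    · have : ∑ i, a i ^ 2 = 4 * ∑ i, (a i / 2) ^ 2 := by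
        rw [mul_sum]
        refine sum_congr rfl fun i _ => ?_
        rw [show a i ^ 2 = (2 * (a i / 2)) ^ 2 by rw [← heven i]]
        ring
      omega
  · refine exists_mem_posRoots_of_forall_eq_one_or ha (fun i => ?_) hsum
    have := hpar i 0
    have : -2 ≤ a i := by nlinarith [hle i]
    have : a i ≤ 2 := by nlinarith [hle i]
    omega

lemma exists_dvd_sq_of_reflection_mem {w γ : 𝔼} {k : ℕ} (hw : w ∈ lattice)
    (hk : ⟪w, w⟫ = 2 * k) (hk₀ : k ≠ 0) (hγ : γ ∈ lattice) (hR : (ℝ ∙ w)ᗮ.reflection γ ∈ lattice) :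
    ∃ t : ℤ, ⟪γ, w⟫ = t ∧ (k : ℤ) ∣ t ^ 2 := by
  obtain ⟨t, ht⟩ := exists_inner_eq_intCast hγ hw
  obtain ⟨u, hu⟩ := exists_inner_eq_intCast hγ hR
  obtain ⟨m, hm⟩ := exists_inner_eq_intCast hγ hγ
  refine ⟨t, ht, m - u, ?_⟩
  rw [reflection_orthogonal_span_singleton_apply, inner_sub_right, real_inner_smul_right,
    ← real_inner_self_eq_norm_sq, real_inner_comm γ w, hk, hm, ht] at hu
  have : (t : ℝ) ^ 2 = k * (m - u) := by
    field_simp at hu; linear_combination -hu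
  exact_mod_cast this

lemma inv_smul_mem_lattice_of_dvd {w : 𝔼} {k p : ℕ} (hw : w ∈ lattice)
    (hk : ⟪w, w⟫ = 2 * k) (hk₀ : k ≠ 0) (hR : ∀ γ ∈ posRoots, (ℝ ∙ w)ᗮ.reflection γ ∈ lattice)
    (hp : p.Prime) (hpk : p ∣ k) : (p : ℝ)⁻¹ • w ∈ lattice := by
  refine mem_lattice_of_forall_inner_posRoots fun γ hγ => ?_
  obtain ⟨t, ht, hkt⟩ :=
    exists_dvd_sq_of_reflection_mem hw hk hk₀ (mem_lattice_of_mem_posRoots hγ) (hR γ hγ)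
  obtain ⟨t', rfl⟩ := (Nat.prime_iff_prime_int.1 hp).dvd_of_dvd_pow
    ((Int.natCast_dvd_natCast.2 hpk).trans hkt)
  refine ⟨t', ?_⟩
  rw [real_inner_smul_right, ht]
  push_cast
  field_simp [hp.ne_zero]

lemma exists_inner_self_eq_two_of_reflection_mem {w : 𝔼} (hw : w ∈ lattice) (hw₀ : w ≠ 0)
    (hR : ∀ γ ∈ posRoots, (ℝ ∙ w)ᗮ.reflection γ ∈ lattice) :
    ∃ x ∈ lattice, ⟪x, x⟫ = 2 ∧ ∃ c : ℝ, w = c • x := by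
  obtain ⟨k, hk⟩ := exists_inner_self_eq_two_mul hw
  induction k using Nat.strong_induction_on generalizing w with
  | _ k ih =>
  have hk₀ : k ≠ 0 := by rintro rfl; exact hw₀ (by simpa using hk)
  obtain rfl | hk₁ := eq_or_ne k 1
  · exact ⟨w, hw, by simpa using hk, 1, (one_smul _ _).symm⟩
  set p := k.minFac
  have hp : p.Prime := Nat.minFac_prime hk₁
  have hp₀ : (p : ℝ) ≠ 0 := by exact_mod_cast hp.ne_zero
  have hy := inv_smul_mem_lattice_of_dvd hw hk hk₀ hR hp k.minFac_dvd
  obtain ⟨k', hk'⟩ := exists_inner_self_eq_two_mul hy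
  have hkk' : k = p ^ 2 * k' := by
    have : (k : ℝ) = p ^ 2 * k' := by
      rw [real_inner_smul_left, real_inner_smul_right, hk] at hk'
      field_simp at hk'; linarith
    exact_mod_cast this
  have hlt : k' < k := by
    have : k' ≠ 0 := by rintro rfl; exact hk₀ (by simpa using hkk')
    rw [hkk']
    exact (Nat.lt_mul_iff_one_lt_left (Nat.pos_of_ne_zero this)).2
      (Nat.one_lt_pow two_ne_zero hp.one_lt)
  have hRy : ∀ γ ∈ posRoots, (ℝ ∙ (p : ℝ)⁻¹ • w)ᗮ.reflection γ ∈ lattice := by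
    simpa only [reflection_orthogonal_span_singleton_smul (inv_ne_zero hp₀)] using hR
  obtain ⟨x, hx, hx₂, c, hc⟩ := ih k' hlt hy (smul_ne_zero (inv_ne_zero hp₀) hw₀) hRy hk'
  exact ⟨x, hx, hx₂, p * c, by rw [mul_smul, ← hc, smul_inv_smul₀ hp₀]⟩

lemma reflection_mem_lattice_of_forall_neg_vH {H : 𝔼}
    (hneg : ∀ γ ∈ posRoots, ⟪γ, H⟫ ≠ 0 → ∃ β ∈ posRoots, ⟪β, H⟫ ≠ 0 ∧ -vH H γ = vH H β)
    {γ : 𝔼} (hγ : γ ∈ posRoots) : (ℝ ∙ H)ᗮ.reflection γ ∈ lattice := by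
  by_cases hγH : ⟪γ, H⟫ = 0
  · rw [Submodule.reflection_mem_subspace_eq_self]
    · exact mem_lattice_of_mem_posRoots hγ
    · rwa [Submodule.mem_orthogonal_singleton_iff_inner_right, real_inner_comm]
  obtain ⟨β, hβ, hβH, h⟩ := hneg γ hγ hγH
  have hnorm : ‖β‖ = ‖γ‖ := by
    rw [norm_eq_sqrt_real_inner, norm_eq_sqrt_real_inner, inner_self_eq_two_of_mem_posRoots hβ,
      inner_self_eq_two_of_mem_posRoots hγ]
  rcases reflection_eq_or_eq_neg_of_neg_vH_eq hγH hβH hnorm h with h | h <;> rw [h]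
  · exact mem_lattice_of_mem_posRoots hβ
  · exact neg_mem (mem_lattice_of_mem_posRoots hβ)

end E8

/-- For the root system of type `E₈`, no orbit other than those through
restricted root vectors is austere: for every nonzero `H ∈ ℝ⁸` not proportional
to any positive root, the set `S_H = {α/⟪α,H⟫ - H/‖H‖²}` is not invariant under
negation. (The condition `∏ εᵢ = 1` on signs `εᵢ = ±1` encodes that the number
of minus signs `Σ ν(i)` is even.) -/
theorem stmt_18
    (Rp : Set (EuclideanSpace ℝ (Fin 8)))
    (hRp : Rp = {x | (∃ i j : Fin 8, i < j ∧
        (x = -EuclideanSpace.single i (1 : ℝ) + EuclideanSpace.single j 1 ∨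
         x = EuclideanSpace.single i (1 : ℝ) + EuclideanSpace.single j 1)) ∨
      (∃ ε : Fin 7 → ℝ, (∀ i, ε i = 1 ∨ ε i = -1) ∧ (∏ i, ε i) = 1 ∧
        x = (1 / 2 : ℝ) • (EuclideanSpace.single (7 : Fin 8) (1 : ℝ)
          + ∑ i : Fin 7, ε i •
              EuclideanSpace.single (Fin.castLE (by norm_num) i) (1 : ℝ)))})
    (H : EuclideanSpace ℝ (Fin 8)) (hH : H ≠ 0)
    (hprop : ∀ α ∈ Rp, ∀ c : ℝ, H ≠ c • α)
    (S : Set (EuclideanSpace ℝ (Fin 8)))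
    (hS : S = {y | ∃ α ∈ Rp, ⟪α, H⟫ ≠ 0 ∧ y = (⟪α, H⟫)⁻¹ • α - (‖H‖ ^ 2)⁻¹ • H}) :
    (fun y => -y) '' S ≠ S := by
  obtain rfl : Rp = E8.posRoots := hRp
  intro hsym
  have hneg : ∀ y ∈ S, -y ∈ S := fun y hy => hsym ▸ Set.mem_image_of_mem _ hy
  subst hS
  have hR : ∀ γ ∈ E8.posRoots, (ℝ ∙ H)ᗮ.reflection γ ∈ E8.lattice := fun γ hγ =>
    E8.reflection_mem_lattice_of_forall_neg_vH (fun γ hγ hγH => hneg _ ⟨γ, hγ, hγH, rfl⟩) hγ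
  obtain ⟨α₀, hα₀, hα₀H⟩ := E8.exists_mem_posRoots_inner_ne_zero hH
  set c := 2 * ⟪H, α₀⟫ / ‖H‖ ^ 2
  have hc : c ≠ 0 := div_ne_zero (mul_ne_zero two_ne_zero (by rwa [real_inner_comm]))
    (pow_ne_zero 2 (norm_ne_zero_iff.2 hH))
  have hw : c • H ∈ E8.lattice := by
    have := sub_mem (E8.mem_lattice_of_mem_posRoots hα₀) (hR α₀ hα₀)
    rwa [reflection_orthogonal_span_singleton_apply, sub_sub_cancel] at this
  obtain ⟨x, hx, hx₂, d, hd⟩ := E8.exists_inner_self_eq_two_of_reflection_mem hw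
    (smul_ne_zero hc hH) (by simpa only [reflection_orthogonal_span_singleton_smul hc] using hR)
  have hHx : H = (c⁻¹ * d) • x := by rw [mul_smul, ← hd, inv_smul_smul₀ hc]
  obtain ⟨α, hα, hxα | hxα⟩ := E8.exists_mem_posRoots_eq_or_eq_neg hx hx₂
  · exact hprop α hα _ (hxα ▸ hHx)
  · exact hprop α hα (-(c⁻¹ * d)) (by rw [hHx, hxα, smul_neg, neg_smul])
end
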